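/- arXiv:math/0212328 — 6 statements merged into one kernel-verified Lean document; each statement's English description precedes it below -/
import Mathlib

section
/- The number of 321-avoiding permutations in S_n equals the number of 132-avoiding permutations in S_n. -/
/-- `σ` avoids the pattern 321, i.e. there is no decreasing subsequence of length 3. -/
def Avoids321 {n : ℕ} (σ : Equiv.Perm (Fin n)) : Prop :=
  ¬ ∃ i j k : Fin n, i < j ∧ j < k ∧ σ k < σ j ∧ σ j < σ i

/-- `σ` avoids the pattern 132. -/
def Avoids132 {n : ℕ} (σ : Equiv.Perm (Fin n)) : Prop :=
  ¬ ∃ i j k : Fin n, i < j ∧ j < k ∧ σ i < σ k ∧ σ k < σ j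

/-- The number of fixed points of `σ`. -/
def fp {n : ℕ} (σ : Equiv.Perm (Fin n)) : ℕ :=
  (Finset.univ.filter fun i => σ i = i).card

/-- The number of excedances of `σ`. -/
def exc {n : ℕ} (σ : Equiv.Perm (Fin n)) : ℕ :=
  (Finset.univ.filter fun i => i < σ i).card

/-- The length of the longest increasing subsequence of `σ`. -/
noncomputable def lis {n : ℕ} (σ : Equiv.Perm (Fin n)) : ℕ :=
  sSup {k | ∃ f : Fin k → Fin n, StrictMono f ∧ StrictMono (σ ∘ f)}

/-- The rank of `σ` : the largest `k` such that (in one-line, 0-indexed notation)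
`σ i ≥ k` for all `i < k`. -/
noncomputable def rk {n : ℕ} (σ : Equiv.Perm (Fin n)) : ℕ :=
  sSup {k | ∀ i : Fin n, (i : ℕ) < k → k ≤ (σ i : ℕ)}

noncomputable def greedy (n : ℕ) (f : ℕ → ℕ) (mx : Bool) : ℕ → ℕ
  | i =>
    if i = 0 ∨ f i < f (i - 1) then f i
    else
      let S : Set ℕ := {v | v < n ∧ f i < v ∧ ∀ j, j < i → greedy n f mx j ≠ v}
      if mx then sSup S else sInf S
termination_by i => i

lemma greedy_inv (n : ℕ) (f : ℕ → ℕ) (mx : Bool)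
    (hA : ∀ i j : ℕ, i ≤ j → f j ≤ f i) (hB : ∀ i, i < n → f i + i < n) :
    ∀ i, i < n →
      greedy n f mx i < n ∧ f i ≤ greedy n f mx i ∧
      (∀ j, j < i → greedy n f mx j ≠ greedy n f mx i) ∧
      (∃ j, j ≤ i ∧ greedy n f mx j = f i) ∧
      (¬(i = 0 ∨ f i < f (i - 1)) → f i < greedy n f mx i ∧
        greedy n f mx i ∈ {v | v < n ∧ f i < v ∧ ∀ j, j < i → greedy n f mx j ≠ v} ∧
        (mx = true → greedy n f mx i =
          sSup {v | v < n ∧ f i < v ∧ ∀ j, j < i → greedy n f mx j ≠ v}) ∧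
        (mx = false → greedy n f mx i =
          sInf {v | v < n ∧ f i < v ∧ ∀ j, j < i → greedy n f mx j ≠ v})) := by
  intro i
  induction i using Nat.strong_induction_on with
  | _ i IH =>
  intro hi
  by_cases hmp : i = 0 ∨ f i < f (i - 1)
  · have hg : greedy n f mx i = f i := by rw [greedy]; simp [hmp]
    refine ⟨?_, le_of_eq hg.symm, ?_, ⟨i, le_refl i, hg⟩, fun h => absurd hmp h⟩
    · rw [hg]; have := hB i hi; omega
    · intro j hj
      rw [hg]
      rcases hmp with h0 | hd
      · omega
      · have h1 : f (i - 1) ≤ f j := hA j (i - 1) (by omega)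
        have h2 : f j ≤ greedy n f mx j := (IH j hj (by omega)).2.1
        omega
  · have hi0 : i ≠ 0 := by tauto
    have heq : f i = f (i - 1) :=
      le_antisymm (hA (i - 1) i (by omega)) (by push_neg at hmp; exact hmp.2)
    set S : Set ℕ := {v | v < n ∧ f i < v ∧ ∀ j, j < i → greedy n f mx j ≠ v} with hS
    have hSne : S.Nonempty := by
      by_contra hne
      rw [Set.not_nonempty_iff_eq_empty] at hne
      have hsub : insert (f i) (Finset.Ioo (f i) n) ⊆ (Finset.range i).image (greedy n f mx) := by
        intro v hv
        rcases Finset.mem_insert.mp hv with rfl | hv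
        · obtain ⟨j, hj, hgj⟩ := (IH (i - 1) (by omega) (by omega)).2.2.2.1
          exact Finset.mem_image.mpr ⟨j, Finset.mem_range.mpr (by omega), by rw [hgj, heq]⟩
        · rw [Finset.mem_Ioo] at hv
          by_contra hvU
          have : v ∈ S := ⟨hv.2, hv.1, fun j hj hgj => hvU
            (Finset.mem_image.mpr ⟨j, Finset.mem_range.mpr hj, hgj⟩)⟩
          rw [hne] at this; exact this
      have hcard1 : (insert (f i) (Finset.Ioo (f i) n)).card = n - f i := by
        rw [Finset.card_insert_of_notMem (by simp), Nat.card_Ioo]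
        have := hB i hi; omega
      have hcard2 : ((Finset.range i).image (greedy n f mx)).card ≤ i :=
        le_trans (Finset.card_image_le) (by simp)
      have := Finset.card_le_card hsub
      have := hB i hi
      omega
    have hSbdd : BddAbove S := ⟨n, fun v hv => le_of_lt hv.1⟩
    have hgdef : greedy n f mx i = if mx then sSup S else sInf S := by
      rw [greedy]; simp only [hmp, if_false]; rfl
    have hgS : greedy n f mx i ∈ S := by
      rw [hgdef]
      cases mx
      · simpa using Nat.sInf_mem hSne
      · simpa using Nat.sSup_mem hSne hSbdd
    exact ⟨hgS.1, le_of_lt hgS.2.1, fun j hj => hgS.2.2 j hj,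
      by
        obtain ⟨j, hj, hgj⟩ := (IH (i - 1) (by omega) (by omega)).2.2.2.1
        exact ⟨j, by omega, by rw [hgj, heq]⟩,
      fun _ => ⟨hgS.2.1, hgS, fun hmx => by rw [hgdef, hmx]; simp,
        fun hmx => by rw [hgdef, hmx]; simp⟩⟩

/-- running minimum of σ over positions ≤ i (as naturals) -/
noncomputable def rmf {n : ℕ} (σ : Equiv.Perm (Fin n)) (i : ℕ) : ℕ :=
  sInf {v | ∃ j : Fin n, (j : ℕ) ≤ i ∧ (σ j : ℕ) = v}

lemma rmf_le {n : ℕ} (σ : Equiv.Perm (Fin n)) (j : Fin n) (i : ℕ) (h : (j : ℕ) ≤ i) :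
    rmf σ i ≤ σ j := Nat.sInf_le ⟨j, h, rfl⟩

lemma rmf_attain {n : ℕ} (σ : Equiv.Perm (Fin n)) (hn : 0 < n) (i : ℕ) :
    ∃ j : Fin n, (j : ℕ) ≤ i ∧ (σ j : ℕ) = rmf σ i := by
  have hne : {v | ∃ j : Fin n, (j : ℕ) ≤ i ∧ (σ j : ℕ) = v}.Nonempty :=
    ⟨(σ ⟨0, hn⟩ : ℕ), ⟨⟨0, hn⟩, Nat.zero_le i, rfl⟩⟩
  exact Nat.sInf_mem hne

lemma rmf_anti {n : ℕ} (σ : Equiv.Perm (Fin n)) : ∀ i j : ℕ, i ≤ j → rmf σ j ≤ rmf σ i := by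
  intro i j hij
  rcases Nat.eq_zero_or_pos n with rfl | hn
  · have h1 : {v | ∃ j : Fin 0, (j : ℕ) ≤ i ∧ (σ j : ℕ) = v} = ∅ := by
      ext v; simp only [Set.mem_setOf_eq, Set.mem_empty_iff_false, iff_false, not_exists]
      exact fun j => j.elim0
    have h2 : {v | ∃ k : Fin 0, (k : ℕ) ≤ j ∧ (σ k : ℕ) = v} = ∅ := by
      ext v; simp only [Set.mem_setOf_eq, Set.mem_empty_iff_false, iff_false, not_exists]
      exact fun k => k.elim0
    rw [rmf, rmf, h1, h2]
  · obtain ⟨k, hk, hv⟩ := rmf_attain σ hn i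
    rw [← hv]
    exact rmf_le σ k j (le_trans hk hij)

lemma rmf_hB {n : ℕ} (σ : Equiv.Perm (Fin n)) : ∀ i, i < n → rmf σ i + i < n := by
  intro i hi
  have hV : ((Finset.range (i + 1)).image
      (fun j => (σ ⟨min j i, by omega⟩ : ℕ))) ⊆ Finset.Ico (rmf σ i) n := by
    intro v hv
    obtain ⟨j, hj, rfl⟩ := Finset.mem_image.mp hv
    rw [Finset.mem_range] at hj
    exact Finset.mem_Ico.mpr ⟨rmf_le σ _ i (by simp), (σ _).isLt⟩
  have hcard : ((Finset.range (i + 1)).image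
      (fun j => (σ ⟨min j i, by omega⟩ : ℕ))).card = i + 1 := by
    rw [Finset.card_image_of_injOn, Finset.card_range]
    intro a ha b hb hab
    have h1 : (⟨min a i, by omega⟩ : Fin n) = ⟨min b i, by omega⟩ :=
      σ.injective (Fin.val_injective hab)
    have h2 := congrArg Fin.val h1
    simp only [Finset.coe_range, Set.mem_Iio] at ha hb
    simp only at h2
    omega
  have := Finset.card_le_card hV
  rw [hcard, Nat.card_Ico] at this
  omega

def Avoids123' {n : ℕ} (σ : Equiv.Perm (Fin n)) : Prop :=
  ¬ ∃ i j k : Fin n, i < j ∧ j < k ∧ σ i < σ j ∧ σ j < σ k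

lemma greedy_no132 (n : ℕ) (f : ℕ → ℕ)
    (hA : ∀ i j : ℕ, i ≤ j → f j ≤ f i) (hB : ∀ i, i < n → f i + i < n) :
    ¬ ∃ i j k : ℕ, i < j ∧ j < k ∧ k < n ∧
      greedy n f false i < greedy n f false k ∧ greedy n f false k < greedy n f false j := by
  rintro ⟨i, j, k, hij, hjk, hk, h1, h2⟩
  have invi := greedy_inv n f false hA hB i (by omega)
  have invj := greedy_inv n f false hA hB j (by omega)
  have invk := greedy_inv n f false hA hB k hk
  have hfij : f j ≤ f i := hA i j (le_of_lt hij)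
  have hmpj : ¬(j = 0 ∨ f j < f (j - 1)) := by
    intro hmp
    have hg : greedy n f false j = f j := by rw [greedy]; simp [hmp]
    have := invi.2.1
    omega
  obtain ⟨hflt, hmem, _, hinf⟩ := invj.2.2.2.2 hmpj
  have hkS : greedy n f false k ∈
      {v | v < n ∧ f j < v ∧ ∀ j', j' < j → greedy n f false j' ≠ v} := by
    refine ⟨invk.1, by have := invi.2.1; omega, fun j' hj' => invk.2.2.1 j' (by omega)⟩
  have := Nat.sInf_le hkS
  rw [← hinf rfl] at this
  omega

lemma greedy_no123 (n : ℕ) (f : ℕ → ℕ)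
    (hA : ∀ i j : ℕ, i ≤ j → f j ≤ f i) (hB : ∀ i, i < n → f i + i < n) :
    ¬ ∃ i j k : ℕ, i < j ∧ j < k ∧ k < n ∧
      greedy n f true i < greedy n f true j ∧ greedy n f true j < greedy n f true k := by
  rintro ⟨i, j, k, hij, hjk, hk, h1, h2⟩
  have invi := greedy_inv n f true hA hB i (by omega)
  have invj := greedy_inv n f true hA hB j (by omega)
  have invk := greedy_inv n f true hA hB k hk
  have hfij : f j ≤ f i := hA i j (le_of_lt hij)
  have hmpj : ¬(j = 0 ∨ f j < f (j - 1)) := by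
    intro hmp
    have hg : greedy n f true j = f j := by rw [greedy]; simp [hmp]
    have := invi.2.1
    omega
  obtain ⟨hflt, hmem, hsup, _⟩ := invj.2.2.2.2 hmpj
  have hkS : greedy n f true k ∈
      {v | v < n ∧ f j < v ∧ ∀ j', j' < j → greedy n f true j' ≠ v} := by
    refine ⟨invk.1, by have := invi.2.1; omega, fun j' hj' => invk.2.2.1 j' (by omega)⟩
  have hbdd : BddAbove {v | v < n ∧ f j < v ∧ ∀ j', j' < j → greedy n f true j' ≠ v} :=
    ⟨n, fun v hv => le_of_lt hv.1⟩
  have := le_csSup hbdd hkS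
  rw [← hsup rfl] at this
  omega

lemma eq_greedy_of_avoids132 {n : ℕ} (σ : Equiv.Perm (Fin n)) (h : Avoids132 σ) :
    ∀ i (hi : i < n), (σ ⟨i, hi⟩ : ℕ) = greedy n (rmf σ) false i := by
  intro i
  induction i using Nat.strong_induction_on with
  | _ i IH =>
  intro hi
  have hn : 0 < n := by omega
  have hA := rmf_anti σ
  have hB := rmf_hB σ
  by_cases hmp : i = 0 ∨ rmf σ i < rmf σ (i - 1)
  · have hg : greedy n (rmf σ) false i = rmf σ i := by rw [greedy]; simp [hmp]
    rw [hg]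
    obtain ⟨j, hj, hjv⟩ := rmf_attain σ hn i
    have hji : (j : ℕ) = i := by
      rcases hmp with h0 | hd
      · omega
      · by_contra hne
        have : rmf σ (i - 1) ≤ σ j := rmf_le σ j (i - 1) (by omega)
        omega
    have hjeq : j = ⟨i, hi⟩ := Fin.ext hji
    rw [← hjeq]; exact hjv
  · have hmp' := hmp
    push_neg at hmp'
    have heq : rmf σ i = rmf σ (i - 1) :=
      le_antisymm (hA (i - 1) i (by omega)) hmp'.2
    obtain ⟨m, hm, hmv⟩ := rmf_attain σ hn (i - 1)
    have hmlt : (m : ℕ) < i := by omega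
    have hσge : rmf σ i ≤ (σ ⟨i, hi⟩ : ℕ) := rmf_le σ ⟨i, hi⟩ i (le_refl i)
    have hσm : (σ m : ℕ) = rmf σ i := by rw [hmv]; exact heq.symm
    have hσne : (σ ⟨i, hi⟩ : ℕ) ≠ rmf σ i := by
      intro hcon
      have h1 : σ m = σ ⟨i, hi⟩ := Fin.val_injective (by rw [hσm, hcon])
      have h2 := congrArg Fin.val (σ.injective h1)
      simp only at h2; omega
    have inv := greedy_inv n (rmf σ) false hA hB i hi
    obtain ⟨hflt, hmem, _, hinf⟩ := inv.2.2.2.2 hmp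
    have hσS : (σ ⟨i, hi⟩ : ℕ) ∈
        {v | v < n ∧ rmf σ i < v ∧ ∀ j, j < i → greedy n (rmf σ) false j ≠ v} := by
      refine ⟨(σ ⟨i, hi⟩).isLt, by omega, fun j hj hgj => ?_⟩
      rw [← IH j hj (by omega)] at hgj
      have h2 := congrArg Fin.val (σ.injective (Fin.val_injective hgj))
      simp only at h2; omega
    have hle : greedy n (rmf σ) false i ≤ (σ ⟨i, hi⟩ : ℕ) := by
      rw [hinf rfl]; exact Nat.sInf_le hσS
    by_contra hne
    have hlt : greedy n (rmf σ) false i < (σ ⟨i, hi⟩ : ℕ) := by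
      rcases lt_or_eq_of_le hle with h' | h'
      · exact h'
      · exact absurd h'.symm hne
    set k := σ.symm ⟨greedy n (rmf σ) false i, hmem.1⟩ with hk
    have hσk : σ k = ⟨greedy n (rmf σ) false i, hmem.1⟩ := σ.apply_symm_apply _
    have hki : i < (k : ℕ) := by
      rcases lt_trichotomy ((k : ℕ)) i with hlt' | heqk | hgt
      · exfalso
        have hIH := IH (k : ℕ) hlt' (by omega)
        have hke : (⟨(k : ℕ), by omega⟩ : Fin n) = k := Fin.eta k _
        rw [hke, hσk] at hIH
        exact hmem.2.2 (k : ℕ) hlt' hIH.symm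
      · exfalso
        have hkk : k = ⟨i, hi⟩ := Fin.ext heqk
        rw [hkk] at hσk
        exact hne (congrArg Fin.val hσk)
      · exact hgt
    apply h
    refine ⟨m, ⟨i, hi⟩, k, ?_, ?_, ?_, ?_⟩
    · exact Fin.lt_def.mpr (by simpa using hmlt)
    · exact Fin.lt_def.mpr (by simpa using hki)
    · refine Fin.lt_def.mpr ?_
      rw [hσk]
      show (σ m : ℕ) < greedy n (rmf σ) false i
      omega
    · refine Fin.lt_def.mpr ?_
      rw [hσk]
      show greedy n (rmf σ) false i < (σ ⟨i, hi⟩ : ℕ)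
      exact hlt

lemma eq_greedy_of_avoids123 {n : ℕ} (σ : Equiv.Perm (Fin n)) (h : Avoids123' σ) :
    ∀ i (hi : i < n), (σ ⟨i, hi⟩ : ℕ) = greedy n (rmf σ) true i := by
  intro i
  induction i using Nat.strong_induction_on with
  | _ i IH =>
  intro hi
  have hn : 0 < n := by omega
  have hA := rmf_anti σ
  have hB := rmf_hB σ
  by_cases hmp : i = 0 ∨ rmf σ i < rmf σ (i - 1)
  · have hg : greedy n (rmf σ) true i = rmf σ i := by rw [greedy]; simp [hmp]
    rw [hg]
    obtain ⟨j, hj, hjv⟩ := rmf_attain σ hn i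
    have hji : (j : ℕ) = i := by
      rcases hmp with h0 | hd
      · omega
      · by_contra hne
        have : rmf σ (i - 1) ≤ σ j := rmf_le σ j (i - 1) (by omega)
        omega
    have hjeq : j = ⟨i, hi⟩ := Fin.ext hji
    rw [← hjeq]; exact hjv
  · have hmp' := hmp
    push_neg at hmp'
    have heq : rmf σ i = rmf σ (i - 1) :=
      le_antisymm (hA (i - 1) i (by omega)) hmp'.2
    obtain ⟨m, hm, hmv⟩ := rmf_attain σ hn (i - 1)
    have hmlt : (m : ℕ) < i := by omega
    have hσge : rmf σ i ≤ (σ ⟨i, hi⟩ : ℕ) := rmf_le σ ⟨i, hi⟩ i (le_refl i)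
    have hσm : (σ m : ℕ) = rmf σ i := by rw [hmv]; exact heq.symm
    have hσne : (σ ⟨i, hi⟩ : ℕ) ≠ rmf σ i := by
      intro hcon
      have h1 : σ m = σ ⟨i, hi⟩ := Fin.val_injective (by rw [hσm, hcon])
      have h2 := congrArg Fin.val (σ.injective h1)
      simp only at h2; omega
    have inv := greedy_inv n (rmf σ) true hA hB i hi
    obtain ⟨hflt, hmem, hsup, _⟩ := inv.2.2.2.2 hmp
    have hσS : (σ ⟨i, hi⟩ : ℕ) ∈
        {v | v < n ∧ rmf σ i < v ∧ ∀ j, j < i → greedy n (rmf σ) true j ≠ v} := by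
      refine ⟨(σ ⟨i, hi⟩).isLt, by omega, fun j hj hgj => ?_⟩
      rw [← IH j hj (by omega)] at hgj
      have h2 := congrArg Fin.val (σ.injective (Fin.val_injective hgj))
      simp only at h2; omega
    have hbdd : BddAbove {v | v < n ∧ rmf σ i < v ∧ ∀ j, j < i → greedy n (rmf σ) true j ≠ v} :=
      ⟨n, fun v hv => le_of_lt hv.1⟩
    have hle : (σ ⟨i, hi⟩ : ℕ) ≤ greedy n (rmf σ) true i := by
      rw [hsup rfl]; exact le_csSup hbdd hσS
    by_contra hne
    have hlt : (σ ⟨i, hi⟩ : ℕ) < greedy n (rmf σ) true i := by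
      rcases lt_or_eq_of_le hle with h' | h'
      · exact h'
      · exact absurd h' hne
    set k := σ.symm ⟨greedy n (rmf σ) true i, hmem.1⟩ with hk
    have hσk : σ k = ⟨greedy n (rmf σ) true i, hmem.1⟩ := σ.apply_symm_apply _
    have hki : i < (k : ℕ) := by
      rcases lt_trichotomy ((k : ℕ)) i with hlt' | heqk | hgt
      · exfalso
        have hIH := IH (k : ℕ) hlt' (by omega)
        have hke : (⟨(k : ℕ), by omega⟩ : Fin n) = k := Fin.eta k _
        rw [hke, hσk] at hIH
        exact hmem.2.2 (k : ℕ) hlt' hIH.symm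
      · exfalso
        have hkk : k = ⟨i, hi⟩ := Fin.ext heqk
        rw [hkk] at hσk
        have := congrArg Fin.val hσk
        simp only at this
        omega
      · exact hgt
    apply h
    refine ⟨m, ⟨i, hi⟩, k, ?_, ?_, ?_, ?_⟩
    · exact Fin.lt_def.mpr (by simpa using hmlt)
    · exact Fin.lt_def.mpr (by simpa using hki)
    · exact Fin.lt_def.mpr (by show (σ m : ℕ) < (σ ⟨i, hi⟩ : ℕ); omega)
    · refine Fin.lt_def.mpr ?_
      rw [hσk]
      show (σ ⟨i, hi⟩ : ℕ) < greedy n (rmf σ) true i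
      exact hlt

lemma greedy_congr (n : ℕ) (f f' : ℕ → ℕ) (mx : Bool) (hff : ∀ j, j < n → f j = f' j) :
    ∀ i, i < n → greedy n f mx i = greedy n f' mx i := by
  intro i
  induction i using Nat.strong_induction_on with
  | _ i IH =>
  intro hi
  have h1 : f i = f' i := hff i hi
  have h2 : f (i - 1) = f' (i - 1) := hff (i - 1) (by omega)
  rw [greedy, greedy, h1, h2]
  have hS : {v | v < n ∧ f' i < v ∧ ∀ j, j < i → greedy n f mx j ≠ v}
      = {v | v < n ∧ f' i < v ∧ ∀ j, j < i → greedy n f' mx j ≠ v} := by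
    ext v
    simp only [Set.mem_setOf_eq]
    constructor
    · rintro ⟨a, b, c⟩
      exact ⟨a, b, fun j hj => by rw [← IH j hj (by omega)]; exact c j hj⟩
    · rintro ⟨a, b, c⟩
      exact ⟨a, b, fun j hj => by rw [IH j hj (by omega)]; exact c j hj⟩
  rw [hS]

noncomputable def toPerm (n : ℕ) (f : ℕ → ℕ) (mx : Bool)
    (hA : ∀ i j : ℕ, i ≤ j → f j ≤ f i) (hB : ∀ i, i < n → f i + i < n) :
    Equiv.Perm (Fin n) :=
  Equiv.ofBijective (fun i => ⟨greedy n f mx i, (greedy_inv n f mx hA hB i i.isLt).1⟩)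
    (Finite.injective_iff_bijective.mp (by
      intro a b hab
      have hv : greedy n f mx (a : ℕ) = greedy n f mx (b : ℕ) := congrArg Fin.val hab
      by_contra hne
      rcases lt_or_gt_of_ne hne with hl | hl
      · exact (greedy_inv n f mx hA hB (b : ℕ) b.isLt).2.2.1 (a : ℕ) (Fin.lt_def.mp hl) hv
      · exact (greedy_inv n f mx hA hB (a : ℕ) a.isLt).2.2.1 (b : ℕ) (Fin.lt_def.mp hl) hv.symm))

lemma toPerm_apply (n : ℕ) (f : ℕ → ℕ) (mx : Bool) (hA : ∀ i j : ℕ, i ≤ j → f j ≤ f i)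
    (hB : ∀ i, i < n → f i + i < n) (i : Fin n) :
    ((toPerm n f mx hA hB) i : ℕ) = greedy n f mx (i : ℕ) := rfl

lemma rmf_toPerm (n : ℕ) (f : ℕ → ℕ) (mx : Bool) (hA : ∀ i j : ℕ, i ≤ j → f j ≤ f i)
    (hB : ∀ i, i < n → f i + i < n) :
    ∀ i, i < n → rmf (toPerm n f mx hA hB) i = f i := by
  intro i hi
  rw [rmf]
  apply le_antisymm
  · obtain ⟨j, hj, hjv⟩ := (greedy_inv n f mx hA hB i hi).2.2.2.1
    exact Nat.sInf_le ⟨⟨j, by omega⟩, hj, hjv⟩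
  · have hne : {v | ∃ j : Fin n, (j : ℕ) ≤ i ∧ ((toPerm n f mx hA hB) j : ℕ) = v}.Nonempty :=
      ⟨((toPerm n f mx hA hB) ⟨0, by omega⟩ : ℕ), ⟨0, by omega⟩, Nat.zero_le i, rfl⟩
    apply le_csInf hne
    rintro v ⟨j, hj, rfl⟩
    calc f i ≤ f (j : ℕ) := hA (j : ℕ) i hj
    _ ≤ greedy n f mx (j : ℕ) := (greedy_inv n f mx hA hB (j : ℕ) j.isLt).2.1
    _ = _ := (toPerm_apply n f mx hA hB j).symm

lemma toPerm_avoids132 (n : ℕ) (f : ℕ → ℕ) (hA : ∀ i j : ℕ, i ≤ j → f j ≤ f i)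
    (hB : ∀ i, i < n → f i + i < n) : Avoids132 (toPerm n f false hA hB) := by
  rintro ⟨i, j, k, hij, hjk, h1, h2⟩
  exact greedy_no132 n f hA hB ⟨(i : ℕ), (j : ℕ), (k : ℕ), Fin.lt_def.mp hij,
    Fin.lt_def.mp hjk, k.isLt, Fin.lt_def.mp h1, Fin.lt_def.mp h2⟩

lemma toPerm_avoids123 (n : ℕ) (f : ℕ → ℕ) (hA : ∀ i j : ℕ, i ≤ j → f j ≤ f i)
    (hB : ∀ i, i < n → f i + i < n) : Avoids123' (toPerm n f true hA hB) := by
  rintro ⟨i, j, k, hij, hjk, h1, h2⟩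
  exact greedy_no123 n f hA hB ⟨(i : ℕ), (j : ℕ), (k : ℕ), Fin.lt_def.mp hij,
    Fin.lt_def.mp hjk, k.isLt, Fin.lt_def.mp h1, Fin.lt_def.mp h2⟩

noncomputable def e23 (n : ℕ) :
    {σ : Equiv.Perm (Fin n) // Avoids123' σ} ≃ {σ : Equiv.Perm (Fin n) // Avoids132 σ} where
  toFun s := ⟨toPerm n (rmf s.1) false (rmf_anti s.1) (rmf_hB s.1),
    toPerm_avoids132 n (rmf s.1) (rmf_anti s.1) (rmf_hB s.1)⟩
  invFun s := ⟨toPerm n (rmf s.1) true (rmf_anti s.1) (rmf_hB s.1),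
    toPerm_avoids123 n (rmf s.1) (rmf_anti s.1) (rmf_hB s.1)⟩
  left_inv := by
    rintro ⟨σ, hσ⟩
    apply Subtype.ext
    apply Equiv.ext
    intro x
    apply Fin.val_injective
    rw [toPerm_apply]
    rw [greedy_congr n _ (rmf σ) true
      (fun j hj => rmf_toPerm n (rmf σ) false (rmf_anti σ) (rmf_hB σ) j hj) (x : ℕ) x.isLt]
    rw [← eq_greedy_of_avoids123 σ hσ (x : ℕ) x.isLt]
  right_inv := by
    rintro ⟨σ, hσ⟩
    apply Subtype.ext
    apply Equiv.ext
    intro x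
    apply Fin.val_injective
    rw [toPerm_apply]
    rw [greedy_congr n _ (rmf σ) false
      (fun j hj => rmf_toPerm n (rmf σ) true (rmf_anti σ) (rmf_hB σ) j hj) (x : ℕ) x.isLt]
    rw [← eq_greedy_of_avoids132 σ hσ (x : ℕ) x.isLt]

lemma avoids321_iff (n : ℕ) (σ : Equiv.Perm (Fin n)) :
    Avoids321 σ ↔ Avoids123' (σ * Fin.revPerm) := by
  constructor
  · rintro hσ ⟨i, j, k, hij, hjk, h1, h2⟩
    exact hσ ⟨k.rev, j.rev, i.rev, Fin.rev_lt_rev.mpr hjk, Fin.rev_lt_rev.mpr hij, h1, h2⟩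
  · rintro hσ ⟨i, j, k, hij, hjk, h1, h2⟩
    refine hσ ⟨k.rev, j.rev, i.rev, Fin.rev_lt_rev.mpr hjk, Fin.rev_lt_rev.mpr hij, ?_, ?_⟩
    · show σ (k.rev.rev) < σ (j.rev.rev)
      rw [Fin.rev_rev, Fin.rev_rev]; exact h1
    · show σ (j.rev.rev) < σ (i.rev.rev)
      rw [Fin.rev_rev, Fin.rev_rev]; exact h2

lemma revrev (n : ℕ) (τ : Equiv.Perm (Fin n)) : (τ * Fin.revPerm) * Fin.revPerm = τ := by
  apply Equiv.ext
  intro x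
  show τ (x.rev.rev) = τ x
  rw [Fin.rev_rev]

noncomputable def e1 (n : ℕ) :
    {σ : Equiv.Perm (Fin n) // Avoids321 σ} ≃ {σ : Equiv.Perm (Fin n) // Avoids123' σ} where
  toFun s := ⟨s.1 * Fin.revPerm, (avoids321_iff n s.1).mp s.2⟩
  invFun s := ⟨s.1 * Fin.revPerm, by
    have := (avoids321_iff n (s.1 * Fin.revPerm)).mpr
    rw [revrev] at this
    exact this s.2⟩
  left_inv := by rintro ⟨σ, hσ⟩; exact Subtype.ext (revrev n σ)
  right_inv := by rintro ⟨σ, hσ⟩; exact Subtype.ext (revrev n σ)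


/-- The number of 321-avoiding permutations in `S_n` equals the number of
132-avoiding permutations in `S_n`. -/
theorem stmt1 (n : ℕ) :
    Nat.card {σ : Equiv.Perm (Fin n) // Avoids321 σ} =
      Nat.card {σ : Equiv.Perm (Fin n) // Avoids132 σ} :=
  Nat.card_congr ((e1 n).trans (e23 n))
end

section
/- A permutation σ ∈ S_n with no fixed points is 321-avoiding if and only if the subsequence of σ determined by its excedances is increasing and the subsequence determined by its antiexcedances is increasing. -/
lemma aux1 {n : ℕ} (σ : Equiv.Perm (Fin n)) (i j : Fin n) (hij : i < j)
    (hji : σ j < σ i) (hj : j < σ j) : ∃ k, j < k ∧ σ k < σ j := by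
  by_contra hc
  push_neg at hc
  have hA : ((Finset.Iio (σ j)).image σ.symm).card = (σ j : ℕ) := by
    rw [Finset.card_image_of_injective _ σ.symm.injective, Fin.card_Iio]
  have hsub : (Finset.Iio (σ j)).image σ.symm ⊆ (Finset.Iio j).erase i := by
    intro k hk
    simp only [Finset.mem_image, Finset.mem_Iio] at hk
    obtain ⟨v, hv, rfl⟩ := hk
    have hσ : σ (σ.symm v) = v := σ.apply_symm_apply v
    have hk1 : σ.symm v ≤ j := le_of_not_gt fun h => absurd (hc _ h) (by rw [hσ]; exact not_le.mpr hv)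
    have hk2 : σ.symm v ≠ j := by
      intro h; rw [h] at hσ; rw [hσ] at hv; exact lt_irrefl _ hv
    have hk3 : σ.symm v ≠ i := by
      intro h; rw [h] at hσ
      exact absurd (hσ ▸ hji) (asymm hv)
    exact Finset.mem_erase.mpr ⟨hk3, Finset.mem_Iio.mpr (lt_of_le_of_ne hk1 hk2)⟩
  have hle := Finset.card_le_card hsub
  rw [hA, Finset.card_erase_of_mem (Finset.mem_Iio.mpr hij), Fin.card_Iio] at hle
  have h1 : (j : ℕ) < (σ j : ℕ) := hj
  have h2 : (i : ℕ) < (j : ℕ) := hij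
  omega

lemma aux2 {n : ℕ} (σ : Equiv.Perm (Fin n)) (i j : Fin n) (hij : i < j)
    (hji : σ j < σ i) (hi : σ i < i) : ∃ k, k < i ∧ σ i < σ k := by
  by_contra hc
  push_neg at hc
  have hA : ((Finset.Ioi (σ i)).image σ.symm).card = n - 1 - (σ i : ℕ) := by
    rw [Finset.card_image_of_injective _ σ.symm.injective, Fin.card_Ioi]
  have hsub : (Finset.Ioi (σ i)).image σ.symm ⊆ (Finset.Ioi i).erase j := by
    intro k hk
    simp only [Finset.mem_image, Finset.mem_Ioi] at hk
    obtain ⟨v, hv, rfl⟩ := hk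
    have hσ : σ (σ.symm v) = v := σ.apply_symm_apply v
    have hk1 : i ≤ σ.symm v := le_of_not_gt fun h => absurd (hc _ h) (by rw [hσ]; exact not_le.mpr hv)
    have hk2 : σ.symm v ≠ i := by
      intro h; rw [h] at hσ; rw [hσ] at hv; exact lt_irrefl _ hv
    have hk3 : σ.symm v ≠ j := by
      intro h; rw [h] at hσ
      exact absurd (hσ ▸ hji) (asymm hv)
    exact Finset.mem_erase.mpr ⟨hk3, Finset.mem_Ioi.mpr (lt_of_le_of_ne hk1 (Ne.symm hk2))⟩
  have hle := Finset.card_le_card hsub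
  rw [hA, Finset.card_erase_of_mem (Finset.mem_Ioi.mpr hij), Fin.card_Ioi] at hle
  have h1 : (σ i : ℕ) < (i : ℕ) := hi
  have h2 : (i : ℕ) < (j : ℕ) := hij
  have h3 : (j : ℕ) < n := j.isLt
  omega

/-- A fixed-point-free permutation is 321-avoiding iff the subsequence of its
excedances is increasing and the subsequence of its antiexcedances is increasing. -/
theorem stmt6 (n : ℕ) (σ : Equiv.Perm (Fin n)) (hfp : ∀ i, σ i ≠ i) :
    Avoids321 σ ↔
      ((∀ i j : Fin n, i < j → i < σ i → j < σ j → σ i < σ j) ∧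
       (∀ i j : Fin n, i < j → σ i < i → σ j < j → σ i < σ j)) := by
  constructor
  · intro hav
    constructor
    · intro i j hij hi hj
      by_contra hle
      push_neg at hle
      have hji : σ j < σ i := lt_of_le_of_ne hle (fun h => (by simp [σ.injective h] at hij : False))
      obtain ⟨k, hjk, hk⟩ := aux1 σ i j hij hji hj
      exact hav ⟨i, j, k, hij, hjk, hk, hji⟩
    · intro i j hij hi hj
      by_contra hle
      push_neg at hle
      have hji : σ j < σ i := lt_of_le_of_ne hle (fun h => (by simp [σ.injective h] at hij : False))
      obtain ⟨k, hki, hk⟩ := aux2 σ i j hij hji hi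
      exact hav ⟨k, i, j, hki, hij, hji, hk⟩
  · rintro ⟨h1, h2⟩ ⟨i, j, k, hij, hjk, hkj, hji⟩
    rcases (hfp i).lt_or_gt with hi | hi <;>
    rcases (hfp j).lt_or_gt with hj | hj <;>
    rcases (hfp k).lt_or_gt with hk | hk
    · exact absurd (h2 i j hij hi hj) (asymm hji)
    · exact absurd (h2 i j hij hi hj) (asymm hji)
    · exact absurd (h2 i k (lt_trans hij hjk) hi hk) (asymm (lt_trans hkj hji))
    · exact absurd (h1 j k hjk hj hk) (asymm hkj)
    · exact absurd (h2 j k hjk hj hk) (asymm hkj)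
    · exact absurd (h1 i k (lt_trans hij hjk) hi hk) (asymm (lt_trans hkj hji))
    · exact absurd (h1 i j hij hi hj) (asymm hji)
    · exact absurd (h1 i j hij hi hj) (asymm hji)
end

section
/- There is a bijection between 132-avoiding permutations in S_n and Young diagrams that fit inside the staircase shape (n−1, n−2, ..., 1), given by sending σ to its diagram (the union over all i of the cells weakly south-east dominated by (i, σ(i)) in the n×n array). -/
/-!
Row `r` of the diagram of `σ` consists of the cells left of the running minimum
`min (σ 0, …, σ r)`. The `r + 1` distinct values `σ 0, …, σ r` all exceed the length of row `r`,
so the diagram fits in the staircase.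

If two 132-avoiding permutations with the same diagram first differ at `r`, say `σ r < τ r`, then
`σ r` lies above the running minimum of `τ` and is not taken by `τ` before `r`, so `τ` takes it
after `r`, completing a 132 pattern. Conversely, for a lower set `S` in the staircase, letting
`σ r` be the least value not used before `r` with `(r, σ r) ∉ S` gives a 132-avoiding permutation
with diagram `S`.
-/

open Finset

namespace Equiv.Perm

variable {n : ℕ}

def diagram (σ : Equiv.Perm (Fin n)) : Set (ℕ × ℕ) :=
  {p | p.1 < n ∧ ∀ i : Fin n, (i : ℕ) ≤ p.1 → p.2 < (σ i : ℕ)}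

lemma isLowerSet_diagram (σ : Equiv.Perm (Fin n)) : IsLowerSet σ.diagram :=
  fun _ _ hqp hp => ⟨hqp.1.trans_lt hp.1, fun i hi => hqp.2.trans_lt (hp.2 i (hi.trans hqp.1))⟩

lemma add_lt_of_mem_diagram {σ : Equiv.Perm (Fin n)} {p : ℕ × ℕ} (hp : p ∈ σ.diagram) :
    p.1 + p.2 + 1 < n := by
  set r : Fin n := ⟨p.1, hp.1⟩
  have hsub : (Iic r).image (fun i => (σ i : ℕ)) ⊆ Ioo p.2 n :=
    fun _ hv => by
      obtain ⟨i, hi, rfl⟩ := mem_image.mp hv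
      exact mem_Ioo.mpr ⟨hp.2 i (Fin.le_def.mp (mem_Iic.mp hi)), (σ i).isLt⟩
  have hcard := card_le_card hsub
  rw [card_image_of_injective (f := fun i => (σ i : ℕ)) _
    (Fin.val_injective.comp σ.injective), Fin.card_Iic, Nat.card_Ioo] at hcard
  simp only [r] at hcard
  omega

lemma mk_apply_notMem_diagram (σ : Equiv.Perm (Fin n)) (r : Fin n) :
    ((r : ℕ), (σ r : ℕ)) ∉ σ.diagram :=
  fun h => lt_irrefl _ (h.2 r le_rfl)

end Equiv.Perm

open Equiv.Perm

lemma Avoids132.le_of_eqOn_Iio {n : ℕ} {σ τ : Equiv.Perm (Fin n)} (hτ : Avoids132 τ)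
    {r : Fin n} (heq : Set.EqOn σ τ (Set.Iio r)) (hr : ((r : ℕ), (σ r : ℕ)) ∉ τ.diagram) :
    τ r ≤ σ r := by
  by_contra! hlt
  obtain ⟨i, hir, hi⟩ : ∃ i : Fin n, i ≤ r ∧ τ i ≤ σ r := by
    by_contra! h
    exact hr ⟨r.isLt, fun i hi => h i (Fin.le_def.mpr hi)⟩
  have hir : i < r := lt_of_le_of_ne hir (by rintro rfl; exact hi.not_gt hlt)
  have hi : τ i < σ r :=
    lt_of_le_of_ne hi fun h => hir.ne (σ.injective ((heq hir).trans h))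
  obtain ⟨k, hk⟩ := τ.surjective (σ r)
  have hrk : r < k := by
    rcases lt_trichotomy k r with hkr | rfl | hkr
    · exact absurd (σ.injective ((heq hkr).trans hk)) hkr.ne
    · exact absurd hk hlt.ne'
    · exact hkr
  exact hτ ⟨i, r, k, hir, hrk, hk ▸ hi, hk ▸ hlt⟩

lemma injOn_diagram (n : ℕ) :
    Set.InjOn (diagram (n := n)) {σ | Avoids132 σ} := by
  intro σ hσ τ hτ h
  refine Equiv.ext fun r => ?_
  induction r using WellFoundedLT.induction with
  | _ r ih =>
    exact le_antisymm (hσ.le_of_eqOn_Iio (fun j hj => (ih j hj).symm)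
        (h ▸ mk_apply_notMem_diagram τ r))
      (hτ.le_of_eqOn_Iio ih (h ▸ mk_apply_notMem_diagram σ r))

noncomputable def greedyWord (S : Set (ℕ × ℕ)) : ℕ → ℕ
  | r => sInf {v | (r, v) ∉ S ∧ ∀ j < r, greedyWord S j ≠ v}
termination_by r => r
decreasing_by exact ‹_›

section greedyWord

variable {S : Set (ℕ × ℕ)}

lemma greedyWord_le {r v : ℕ} (hv : (r, v) ∉ S) (hunused : ∀ j < r, greedyWord S j ≠ v) :
    greedyWord S r ≤ v := by
  rw [greedyWord.eq_1]
  exact Nat.sInf_le ⟨hv, hunused⟩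

variable {n : ℕ} (hn : ∀ p ∈ S, p.1 + p.2 + 1 < n)
include hn

lemma greedyWord_spec {r : ℕ} (hr : r < n) :
    greedyWord S r < n ∧ (r, greedyWord S r) ∉ S ∧ ∀ j < r, greedyWord S j ≠ greedyWord S r := by
  obtain ⟨v, hv, hvunused⟩ : ∃ v ∈ Ico (n - 1 - r) n, v ∉ (range r).image (greedyWord S) := by
    refine exists_mem_notMem_of_card_lt_card ?_
    calc #((range r).image (greedyWord S)) ≤ r := card_image_le.trans (card_range r).le
      _ < #(Ico (n - 1 - r) n) := by rw [Nat.card_Ico]; omega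
  rw [mem_Ico] at hv
  have hvS : (r, v) ∉ S := fun h => by have := hn _ h; dsimp only at this; omega
  have hvunused' : ∀ j < r, greedyWord S j ≠ v :=
    fun j hj he => hvunused (mem_image.mpr ⟨j, mem_range.mpr hj, he⟩)
  have hmem : greedyWord S r ∈ {v | (r, v) ∉ S ∧ ∀ j < r, greedyWord S j ≠ v} := by
    rw [greedyWord.eq_1]
    exact Nat.sInf_mem ⟨v, hvS, hvunused'⟩
  exact ⟨(greedyWord_le hvS hvunused').trans_lt hv.2, hmem⟩

noncomputable def Equiv.Perm.ofDiagram : Equiv.Perm (Fin n) :=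
  Equiv.ofBijective (fun i => ⟨greedyWord S i, (greedyWord_spec hn i.isLt).1⟩) <|
    Finite.injective_iff_bijective.mp fun a b hab => by
      by_contra hne
      have hab : greedyWord S a = greedyWord S b := congrArg Fin.val hab
      rcases lt_or_gt_of_ne hne with h | h
      · exact (greedyWord_spec hn b.isLt).2.2 a h hab
      · exact (greedyWord_spec hn a.isLt).2.2 b h hab.symm

lemma ofDiagram_apply (i : Fin n) : (ofDiagram hn i : ℕ) = greedyWord S i := rfl

variable (hS : IsLowerSet S)
include hS

lemma avoids132_ofDiagram : Avoids132 (ofDiagram hn) := by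
  rintro ⟨i, j, k, hij, hjk, hik, hkj⟩
  simp only [Fin.lt_def, ofDiagram_apply] at hij hjk hik hkj
  have hjS : ((j : ℕ), greedyWord S k) ∉ S :=
    fun h => (greedyWord_spec hn i.isLt).2.1 (hS ⟨hij.le, hik.le⟩ h)
  have hunused : ∀ t < (j : ℕ), greedyWord S t ≠ greedyWord S k :=
    fun t ht => (greedyWord_spec hn k.isLt).2.2 t (ht.trans hjk)
  exact (greedyWord_le hjS hunused).not_gt hkj

lemma diagram_ofDiagram : (ofDiagram hn).diagram = S := by
  ext ⟨r, c⟩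
  simp only [diagram, Set.mem_ofPred_eq, ofDiagram_apply]
  constructor
  · rintro ⟨hr, hlt⟩
    by_contra hc
    by_cases hused : ∃ j < r, greedyWord S j = c
    · obtain ⟨j, hj, rfl⟩ := hused
      exact lt_irrefl _ (hlt ⟨j, hj.trans hr⟩ hj.le)
    · push Not at hused
      exact (greedyWord_le hc hused).not_gt (hlt ⟨r, hr⟩ le_rfl)
  · intro hc
    refine ⟨by have := hn _ hc; dsimp only at this; omega, fun i hi => ?_⟩
    by_contra! hle
    exact (greedyWord_spec hn i.isLt).2.1 (hS ⟨hi, hle⟩ hc)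

end greedyWord

/-- Sending a 132-avoiding permutation `σ` to its diagram (in the `n × n` array,
0-indexed, the set of cells `(r, c)` not weakly south-east of any point `(i, σ i)`)
is a bijection onto the Young diagrams fitting inside the staircase
`(n-1, n-2, …, 1)`. -/
theorem stmt8 (n : ℕ) :
    Set.BijOn
      (fun σ : Equiv.Perm (Fin n) =>
        {p : ℕ × ℕ | p.1 < n ∧ ∀ i : Fin n, (i : ℕ) ≤ p.1 → p.2 < (σ i : ℕ)})
      {σ | Avoids132 σ}
      {S : Set (ℕ × ℕ) |
        (∀ p ∈ S, p.1 + p.2 + 1 < n) ∧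
        (∀ p ∈ S, ∀ q : ℕ × ℕ, q.1 ≤ p.1 → q.2 ≤ p.2 → q ∈ S)} := by
  refine ⟨fun σ _ => ⟨fun _ hp => add_lt_of_mem_diagram hp,
      fun p hp q h₁ h₂ => isLowerSet_diagram σ ⟨h₁, h₂⟩ hp⟩, injOn_diagram n, ?_⟩
  rintro S ⟨hn, hS⟩
  have hS : IsLowerSet S := fun p q hqp hp => hS p hp q hqp.1 hqp.2
  exact ⟨ofDiagram hn, avoids132_ofDiagram hn hS, diagram_ofDiagram hn hS⟩
end

section
/- Krattenthaler's bijection Ψ from 132-avoiding permutations in S_n to Dyck paths of semilength n satisfies: the number of fixed points of σ equals the number of centered tunnels of Ψ(σ), and the number of excedances of σ equals the number of right tunnels of Ψ(σ). -/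
/-- A Dyck word, encoded as a list of booleans (`true` = up-step, `false` = down-step). -/
def IsDyckWord (w : List Bool) : Prop :=
  w.count true = w.count false ∧ ∀ p : List Bool, p <+: w → p.count false ≤ p.count true

/-- `(A, B, C)` is a tunnel decomposition of `w`, i.e. `w = A u B d C` with `B` a Dyck word. -/
def IsTunnel (w A B C : List Bool) : Prop :=
  w = A ++ true :: (B ++ false :: C) ∧ IsDyckWord B

/-- The number of tunnels of `w`. -/
noncomputable def numTunnels (w : List Bool) : ℕ :=
  Nat.card {T : List Bool × List Bool × List Bool // IsTunnel w T.1 T.2.1 T.2.2}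

/-- The number of centered tunnels of `w` (`|A| = |C|`). -/
noncomputable def ct (w : List Bool) : ℕ :=
  Nat.card {T : List Bool × List Bool × List Bool //
    IsTunnel w T.1 T.2.1 T.2.2 ∧ T.1.length = T.2.2.length}

/-- The number of right tunnels of `w` (`|A| > |C|`). -/
noncomputable def rt (w : List Bool) : ℕ :=
  Nat.card {T : List Bool × List Bool × List Bool //
    IsTunnel w T.1 T.2.1 T.2.2 ∧ T.2.2.length < T.1.length}

/-- The number of left tunnels of `w` (`|A| < |C|`). -/
noncomputable def lt (w : List Bool) : ℕ :=
  Nat.card {T : List Bool × List Bool × List Bool //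
    IsTunnel w T.1 T.2.1 T.2.2 ∧ T.1.length < T.2.2.length}

/-- The height of the path `w` at its midpoint. -/
def heInt (w : List Bool) : ℤ :=
  ((w.take (w.length / 2)).count true : ℤ) - ((w.take (w.length / 2)).count false : ℤ)

/-- The value `σ i` as a natural number, extended by `n` outside the domain. -/
def valAt {n : ℕ} (σ : Equiv.Perm (Fin n)) (i : ℕ) : ℕ :=
  if h : i < n then (σ ⟨i, h⟩ : ℕ) else n

/-- `min (σ 0, …, σ (r-1))`, with the convention `minUpTo σ 0 = n`. -/
def minUpTo {n : ℕ} (σ : Equiv.Perm (Fin n)) (r : ℕ) : ℕ :=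
  (List.range r).foldr (fun i m => min (valAt σ i) m) n

/-- Krattenthaler's bijection `Ψ` from 132-avoiding permutations to Dyck words:
the Dyck path tracing the border of the diagram of `σ`, read from the lower-left
corner (bottom row) to the upper-right corner: going up through row `r` contributes
an up-step, and the right-steps between consecutive rows are governed by the border
of the diagram, whose row `r` has length `minUpTo σ (r+1)`. -/
def psi {n : ℕ} (σ : Equiv.Perm (Fin n)) : List Bool :=
  (List.range n).flatMap fun k =>
    true :: List.replicate (minUpTo σ (n - 1 - k) - minUpTo σ (n - k)) false

namespace Stmt9Aux

def blocksW (e : ℕ → ℕ) (L : ℕ) : List Bool :=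
  (List.range L).flatMap fun j => true :: List.replicate (e j) false

lemma blocksW_succ (e : ℕ → ℕ) (L : ℕ) :
    blocksW e (L+1) = blocksW e L ++ true :: List.replicate (e L) false := by
  simp [blocksW, List.range_succ]

lemma blocksW_count_true (e : ℕ → ℕ) (L : ℕ) : (blocksW e L).count true = L := by
  induction L with
  | zero => simp [blocksW]
  | succ L ih => simp [blocksW_succ, List.count_append, ih, List.count_replicate]

lemma blocksW_count_false (e : ℕ → ℕ) (L : ℕ) :
    (blocksW e L).count false = ∑ i ∈ Finset.range L, e i := by
  induction L with
  | zero => simp [blocksW]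
  | succ L ih =>
      simp [blocksW_succ, List.count_append, ih, List.count_replicate, Finset.sum_range_succ]

lemma blocksW_length (e : ℕ → ℕ) (L : ℕ) :
    (blocksW e L).length = L + ∑ i ∈ Finset.range L, e i := by
  induction L with
  | zero => simp [blocksW]
  | succ L ih => simp [blocksW_succ, ih, Finset.sum_range_succ]; omega

lemma prefix_append_cases {α : Type*} {p X Y : List α} (h : p <+: X ++ Y) :
    p <+: X ∨ ∃ q, q <+: Y ∧ p = X ++ q := by
  rcases le_or_gt p.length X.length with hle | hlt
  · exact Or.inl (List.prefix_of_prefix_length_le h (List.prefix_append X Y) hle)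
  · right
    rcases h with ⟨r, hr⟩
    rcases List.append_eq_append_iff.mp hr with ⟨a', ha1, _⟩ | ⟨c', hc1, hc2⟩
    · exfalso
      have := congrArg List.length ha1
      simp at this; omega
    · exact ⟨c', ⟨r, hc2.symm⟩, hc1⟩

lemma prefix_replicate {α : Type*} {t : ℕ} {a : α} {p : List α} (h : p <+: List.replicate t a) :
    ∃ k ≤ t, p = List.replicate k a := by
  refine ⟨p.length, le_trans (by simpa using h.length_le) le_rfl, ?_⟩
  refine List.eq_replicate_of_mem fun b hb => ?_
  rcases h with ⟨q, hq⟩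
  have : b ∈ List.replicate t a := by rw [← hq]; exact List.mem_append_left _ hb
  exact List.eq_of_mem_replicate this

lemma prefix_block_counts {e : ℕ} {p : List Bool}
    (h : p <+: true :: List.replicate e false) :
    (p.count false ≤ e ∧ p.count true ≤ 1) ∧ (p ≠ [] → p.count true = 1) := by
  rcases p with _ | ⟨b, q⟩
  · simp
  · have hb : b = true := by
      rcases h with ⟨r, hr⟩
      exact (List.cons_eq_cons.mp hr.symm).1.symm
    subst hb
    have hq : q <+: List.replicate e false := by
      rcases h with ⟨r, hr⟩
      exact ⟨r, (List.cons_eq_cons.mp hr).2⟩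
    rcases prefix_replicate hq with ⟨k, hk, rfl⟩
    refine ⟨⟨?_, ?_⟩, fun _ => ?_⟩ <;>
      simp [List.count_cons, List.count_replicate, hk]

lemma blocksW_prefix_ok (e : ℕ → ℕ) (L : ℕ)
    (h : ∀ j < L, ∑ i ∈ Finset.range (j+1), e i ≤ j + 1) :
    ∀ p : List Bool, p <+: blocksW e L → p.count false ≤ p.count true := by
  induction L with
  | zero => intro p hp; simp [blocksW] at hp; simp [hp]
  | succ L ih =>
      intro p hp
      rw [blocksW_succ] at hp
      rcases prefix_append_cases hp with hp' | ⟨q, hq, rfl⟩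
      · exact ih (fun j hj => h j (by omega)) p hp'
      · have hc := prefix_block_counts hq
        rw [List.count_append, List.count_append, blocksW_count_true, blocksW_count_false]
        rcases eq_or_ne q [] with rfl | hne
        · simp only [List.count_nil, Nat.add_zero]
          rcases Nat.eq_zero_or_pos L with rfl | hL
          · simp
          · have hh := h (L-1) (by omega)
            have hL1 : L - 1 + 1 = L := by omega
            rw [hL1] at hh
            omega
        · have h1 := hc.2 hne
          have h2 := hc.1.1
          have h3 := h L (by omega)
          rw [Finset.sum_range_succ] at h3
          omega

lemma blocksW_isDyck (e : ℕ → ℕ) (L : ℕ)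
    (h : ∀ j < L, ∑ i ∈ Finset.range (j+1), e i ≤ j + 1)
    (htot : ∑ i ∈ Finset.range L, e i = L) : IsDyckWord (blocksW e L) := by
  refine ⟨?_, blocksW_prefix_ok e L h⟩
  rw [blocksW_count_true, blocksW_count_false, htot]

lemma blocksW_true_pos (e : ℕ → ℕ) (L : ℕ) {a : ℕ}
    (h : (blocksW e L)[a]? = some true) : ∃ j < L, a = (blocksW e j).length := by
  induction L with
  | zero => simp [blocksW] at h
  | succ L ih =>
      rw [blocksW_succ, List.getElem?_append] at h
      split at h
      · rcases ih h with ⟨j, hj, rfl⟩; exact ⟨j, by omega, rfl⟩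
      · rename_i hlt
        rcases Nat.eq_or_lt_of_le (Nat.le_of_not_lt hlt) with heq | hlt'
        · exact ⟨L, by omega, heq.symm⟩
        · exfalso
          have h0 : a - (blocksW e L).length = (a - (blocksW e L).length - 1) + 1 := by omega
          rw [h0] at h
          simp only [List.getElem?_cons_succ, List.getElem?_replicate] at h
          split at h
          · exact Bool.noConfusion (Option.some.inj h)
          · exact absurd h (by simp)


section Perm
variable {n : ℕ} (σ : Equiv.Perm (Fin n))

-- tunnel uniqueness
lemma dyck_eq_of_append {B C B' C' : List Bool}
    (h : B ++ false :: C = B' ++ false :: C')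
    (hB : IsDyckWord B) (hB' : IsDyckWord B') (hle : B.length ≤ B'.length) :
    B = B' ∧ C = C' := by
  have hpre : B <+: B' :=
    List.prefix_of_prefix_length_le (l₃ := B' ++ false :: C')
      (h ▸ List.prefix_append B _) (List.prefix_append B' _) hle
  rcases hpre with ⟨X, rfl⟩
  rcases X with _ | ⟨x, X'⟩
  · simp only [List.append_nil] at h
    refine ⟨by simp, ?_⟩
    have := List.append_cancel_left h
    exact (List.cons_eq_cons.mp this).2
  · exfalso
    rw [List.append_assoc] at h
    have h2 : false :: C = (x :: X') ++ false :: C' := List.append_cancel_left h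
    have hx : x = false := ((List.cons_eq_cons.mp h2).1).symm
    subst hx
    have hpre2 : B ++ [false] <+: B ++ false :: X' := by
      refine ⟨X', by simp⟩
    have := hB'.2 _ hpre2
    simp only [List.count_append] at this
    have hcount := hB.1
    simp [List.count_cons] at this
    omega

lemma tunnel_unique {w A B C A' B' C' : List Bool}
    (h1 : IsTunnel w A B C) (h2 : IsTunnel w A' B' C')
    (hlen : A.length = A'.length) : A = A' ∧ B = B' ∧ C = C' := by
  obtain ⟨hw1, hB1⟩ := h1
  obtain ⟨hw2, hB2⟩ := h2
  have hAA : A = A' := by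
    have t1 : A = w.take A.length := by rw [hw1, List.take_left]
    have t2 : A' = w.take A'.length := by rw [hw2, List.take_left]
    rw [t1, t2, hlen]
  subst hAA
  rw [hw1] at hw2
  have h3 : B ++ false :: C = B' ++ false :: C' := by
    have := List.append_cancel_left hw2
    exact List.cons_eq_cons.mp this |>.2
  rcases le_total B.length B'.length with hle | hle
  · obtain ⟨hB, hC⟩ := dyck_eq_of_append h3 hB1 hB2 hle
    exact ⟨rfl, hB, hC⟩
  · obtain ⟨hB, hC⟩ := dyck_eq_of_append h3.symm hB2 hB1 hle
    exact ⟨rfl, hB.symm, hC.symm⟩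

-- IsTunnel gives position info
lemma tunnel_getElem {w A B C : List Bool} (h : IsTunnel w A B C) :
    w[A.length]? = some true := by
  rw [h.1, List.getElem?_append]
  simp

lemma tunnel_length {w A B C : List Bool} (h : IsTunnel w A B C) :
    w.length = A.length + B.length + C.length + 2 := by
  rw [h.1]; simp; omega

lemma minUpTo_succ (r : ℕ) :
    minUpTo σ (r+1) = min (valAt σ r) (minUpTo σ r) := by
  have key : ∀ (l : List ℕ) (a init : ℕ),
      l.foldr (fun i m => min (valAt σ i) m) (min a init) =
      min a (l.foldr (fun i m => min (valAt σ i) m) init) := by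
    intro l
    induction l with
    | nil => intro a init; rfl
    | cons x l ih =>
        intro a init
        simp only [List.foldr_cons, ih]
        rw [min_left_comm]
  have : List.range (r+1) = List.range r ++ [r] := List.range_succ
  rw [minUpTo, this, List.foldr_append]
  simp only [List.foldr_cons, List.foldr_nil]
  exact key (List.range r) (valAt σ r) n

lemma minUpTo_zero : minUpTo σ 0 = n := rfl

lemma minUpTo_le_self (r : ℕ) : minUpTo σ r ≤ n := by
  induction r with
  | zero => simp [minUpTo_zero]
  | succ r ih => rw [minUpTo_succ]; omega

lemma minUpTo_anti : Antitone (minUpTo σ) := by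
  refine antitone_nat_of_succ_le fun r => ?_
  rw [minUpTo_succ]; omega

lemma minUpTo_le_valAt {i r : ℕ} (h : i < r) : minUpTo σ r ≤ valAt σ i := by
  induction r with
  | zero => omega
  | succ r ih =>
      rw [minUpTo_succ]
      rcases Nat.lt_or_ge i r with h' | h'
      · exact le_trans (min_le_right _ _) (ih h')
      · have : i = r := by omega
        subst this; exact min_le_left _ _
lemma minUpTo_exists {r : ℕ} (hr : 0 < r) (hrn : r ≤ n) :
    ∃ i, i < r ∧ valAt σ i = minUpTo σ r := by
  induction r with
  | zero => omega
  | succ r ih =>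
      rw [minUpTo_succ]
      rcases Nat.eq_zero_or_pos r with rfl | hr'
      · refine ⟨0, Nat.zero_lt_one, ?_⟩
        rw [minUpTo_zero]
        have : valAt σ 0 ≤ n := by
          unfold valAt; split
          · exact le_of_lt (Fin.is_lt _)
          · exact le_rfl
        omega
      · rcases ih hr' (by omega) with ⟨i, hi, hvi⟩
        rcases le_total (valAt σ r) (minUpTo σ r) with h' | h'
        · exact ⟨r, Nat.lt_succ_self r, by omega⟩
        · exact ⟨i, by omega, by omega⟩

lemma minUpTo_n (hn : 0 < n) : minUpTo σ n = 0 := by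
  have h0 : ∃ i : Fin n, σ i = ⟨0, hn⟩ := ⟨σ.symm ⟨0, hn⟩, Equiv.apply_symm_apply σ _⟩
  rcases h0 with ⟨i, hi⟩
  have : minUpTo σ n ≤ valAt σ i := minUpTo_le_valAt σ i.is_lt
  have : valAt σ (i : ℕ) = 0 := by
    unfold valAt
    rw [dif_pos i.is_lt]
    simp only [Fin.eta, hi]
  omega

lemma minUpTo_lt_of_lt {r : ℕ} (hr : r < n) : minUpTo σ (r+1) ≤ valAt σ r :=
  minUpTo_le_valAt σ (Nat.lt_succ_self r)


lemma valAt_eq {i : ℕ} (h : i < n) : valAt σ i = (σ ⟨i, h⟩ : ℕ) := dif_pos h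

lemma valAt_lt {i : ℕ} (h : i < n) : valAt σ i < n := by
  rw [valAt_eq σ h]; exact (σ ⟨i, h⟩).is_lt

lemma valAt_inj {i j : ℕ} (hi : i < n) (hj : j < n) (h : valAt σ i = valAt σ j) :
    i = j := by
  rw [valAt_eq σ hi, valAt_eq σ hj] at h
  have := σ.injective (Fin.val_injective h)
  exact congrArg Fin.val this

variable (hσ : Avoids132 σ)
include hσ

lemma factB {i k r : ℕ} (hik : i ≤ k) (hkr : k ≤ r) (hr : r < n)
    (h : valAt σ i ≤ valAt σ r) : valAt σ k ≤ valAt σ r := by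
  rcases eq_or_lt_of_le hik with rfl | hik'
  · exact h
  rcases eq_or_lt_of_le hkr with rfl | hkr'
  · exact le_rfl
  by_contra hgt
  push_neg at hgt
  have hi : i < n := by omega
  have hk : k < n := by omega
  refine hσ ⟨⟨i, hi⟩, ⟨k, hk⟩, ⟨r, hr⟩, ?_, ?_, ?_, ?_⟩
  · exact hik'
  · exact hkr'
  · have hne : i ≠ r := by omega
    have : valAt σ i ≠ valAt σ r := fun he => hne (valAt_inj σ hi hr he)
    rw [Fin.lt_def]
    rw [valAt_eq σ hi, valAt_eq σ hr] at h this
    omega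
  · rw [Fin.lt_def]
    rw [valAt_eq σ hk, valAt_eq σ hr] at hgt
    omega

lemma factA {r v : ℕ} (hr : r < n) (h1 : minUpTo σ (r+1) ≤ v) (h2 : v ≤ valAt σ r) :
    ∃ i, i ≤ r ∧ valAt σ i = v := by
  have hv : v < n := lt_of_le_of_lt h2 (valAt_lt σ hr)
  set i0 : Fin n := σ.symm ⟨v, hv⟩ with hi0
  have hσi0 : valAt σ (i0 : ℕ) = v := by
    rw [valAt_eq σ i0.is_lt]
    simp [hi0]
  by_cases hle : (i0 : ℕ) ≤ r
  · exact ⟨i0, hle, hσi0⟩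
  push_neg at hle
  exfalso
  have hvr : v < valAt σ r := by
    rcases eq_or_lt_of_le h2 with rfl | h
    · exact absurd (valAt_inj σ i0.is_lt hr hσi0.symm.symm) (by omega)
    · exact h
  obtain ⟨iμ, hiμ1, hiμ2⟩ := @minUpTo_exists n σ (r+1) (by omega) (by omega)
  have hiμr : iμ < r := by
    rcases Nat.lt_succ_iff_lt_or_eq.mp hiμ1 with h' | heq
    · exact h'
    · exfalso
      rw [heq] at hiμ2
      omega
  have hμv : minUpTo σ (r+1) < v := by
    rcases eq_or_lt_of_le h1 with he | h
    · exfalso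
      have : (iμ : ℕ) = (i0 : ℕ) := valAt_inj σ (by omega) i0.is_lt (by omega)
      omega
    · exact h
  refine hσ ⟨⟨iμ, by omega⟩, ⟨r, hr⟩, ⟨i0.1, i0.is_lt⟩, ?_, ?_, ?_, ?_⟩
  · exact hiμr
  · exact hle
  · rw [Fin.lt_def]
    have e1 := valAt_eq σ (show iμ < n by omega)
    have e2 := valAt_eq σ i0.is_lt
    simp only [Fin.eta] at *
    omega
  · rw [Fin.lt_def]
    have e2 := valAt_eq σ i0.is_lt
    have e3 := valAt_eq σ hr
    simp only [Fin.eta] at *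
    omega

lemma S_card {r : ℕ} (hr : r < n) :
    ((Finset.range (r+1)).filter (fun i => valAt σ i ≤ valAt σ r)).card
      = valAt σ r - minUpTo σ (r+1) + 1 := by
  set c := valAt σ r with hc
  set μ := minUpTo σ (r+1) with hμ
  have hμc : μ ≤ c := minUpTo_le_valAt σ (show r < r+1 by omega)
  have : ((Finset.range (r+1)).filter (fun i => valAt σ i ≤ c)).card
      = (Finset.Icc μ c).card := by
    apply Finset.card_bij (fun i _ => valAt σ i)
    · intro a ha
      simp only [Finset.mem_filter, Finset.mem_range] at ha
      simp only [Finset.mem_Icc]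
      exact ⟨minUpTo_le_valAt σ (by omega), ha.2⟩
    · intro a ha b hb hab
      simp only [Finset.mem_filter, Finset.mem_range] at ha hb
      exact valAt_inj σ (by omega) (by omega) hab
    · intro v hv
      simp only [Finset.mem_Icc] at hv
      obtain ⟨i, hi1, hi2⟩ := factA σ hσ hr hv.1 hv.2
      exact ⟨i, by simp [Finset.mem_filter, Finset.mem_range]; omega, hi2⟩
  rw [this, Nat.card_Icc]
  omega

lemma s_le_r {r : ℕ} (hr : r < n) : valAt σ r - minUpTo σ (r+1) ≤ r := by
  have h1 := S_card σ hσ hr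
  have h2 := Finset.card_filter_le (Finset.range (r+1)) (fun i => valAt σ i ≤ valAt σ r)
  rw [Finset.card_range] at h2
  omega

/-- the set of positions `i ≤ r` with `σ i ≤ σ r` is exactly `[r-s, r]`. -/
lemma S_eq {r : ℕ} (hr : r < n) :
    (Finset.range (r+1)).filter (fun i => valAt σ i ≤ valAt σ r)
      = Finset.Icc (r - (valAt σ r - minUpTo σ (r+1))) r := by
  set c := valAt σ r with hc
  set μ := minUpTo σ (r+1) with hμ
  set s := c - μ with hs
  have hμc : μ ≤ c := minUpTo_le_valAt σ (show r < r+1 by omega)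
  set S := (Finset.range (r+1)).filter (fun i => valAt σ i ≤ c) with hS
  have hcard : S.card = s + 1 := S_card σ hσ hr
  have hsub : S ⊆ Finset.Icc (r - s) r := by
    intro i hi
    simp only [hS, Finset.mem_filter, Finset.mem_range] at hi
    simp only [Finset.mem_Icc]
    refine ⟨?_, by omega⟩
    by_contra hlt
    push_neg at hlt
    have hsubset : Finset.Icc i r ⊆ S := by
      intro k hk
      simp only [Finset.mem_Icc] at hk
      simp only [hS, Finset.mem_filter, Finset.mem_range]
      exact ⟨by omega, factB σ hσ hk.1 hk.2 hr hi.2⟩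
    have h1 : (Finset.Icc i r).card ≤ S.card := Finset.card_le_card hsubset
    rw [Nat.card_Icc, hcard] at h1
    omega
  have : (Finset.Icc (r - s) r).card ≤ S.card := by
    rw [hcard, Nat.card_Icc]
    omega
  exact Finset.eq_of_subset_of_card_le hsub this

lemma mem_S {r i : ℕ} (hr : r < n) (h1 : r - (valAt σ r - minUpTo σ (r+1)) ≤ i)
    (h2 : i ≤ r) : valAt σ i ≤ valAt σ r := by
  have h := S_eq σ hσ hr
  have : i ∈ Finset.Icc (r - (valAt σ r - minUpTo σ (r+1))) r := by
    simp only [Finset.mem_Icc]; omega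
  rw [← h] at this
  simp only [Finset.mem_filter] at this
  exact this.2

lemma not_mem_S {r i : ℕ} (hr : r < n) (h1 : i < r - (valAt σ r - minUpTo σ (r+1))) :
    valAt σ r < valAt σ i := by
  have h := S_eq σ hσ hr
  by_contra hle
  push_neg at hle
  have : i ∈ (Finset.range (r+1)).filter (fun i => valAt σ i ≤ valAt σ r) := by
    simp only [Finset.mem_filter, Finset.mem_range]
    exact ⟨by omega, hle⟩
  rw [h] at this
  simp only [Finset.mem_Icc] at this
  omega

lemma factC2 {r t : ℕ} (hr : r < n)
    (h1 : r - (valAt σ r - minUpTo σ (r+1)) < t) (h2 : t ≤ r) :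
    minUpTo σ t ≤ minUpTo σ (r+1) + (r - t) := by
  set c := valAt σ r with hc
  set μ := minUpTo σ (r+1) with hμ
  set s := c - μ with hs
  set r' := r - s with hr'
  have hμc : μ ≤ c := minUpTo_le_valAt σ (show r < r+1 by omega)
  have hsr : s ≤ r := s_le_r σ hσ hr
  by_contra hgt
  push_neg at hgt
  set θ := μ + (r - t) with hθ
  -- valAt maps Ico r' t injectively into Icc (θ+1) (c-1)
  have hmap : ∀ i ∈ Finset.Ico r' t, valAt σ i ∈ Finset.Icc (θ+1) (c-1) := by
    intro i hi
    simp only [Finset.mem_Ico] at hi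
    simp only [Finset.mem_Icc]
    constructor
    · have := minUpTo_le_valAt σ (show i < t by omega)
      omega
    · have hle : valAt σ i ≤ c := mem_S σ hσ hr hi.1 (by omega)
      have hne : valAt σ i ≠ c := by
        intro he
        have : i = r := valAt_inj σ (by omega) hr he
        omega
      omega
  have hinj : Set.InjOn (valAt σ) (Finset.Ico r' t) := by
    intro a ha b hb hab
    simp only [Finset.coe_Ico, Set.mem_Ico] at ha hb
    exact valAt_inj σ (by omega) (by omega) hab
  have hcard := Finset.card_le_card_of_injOn (valAt σ) hmap hinj
  rw [Nat.card_Ico, Nat.card_Icc] at hcard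
  omega



/-- block sizes of `psi`. -/
def dW {n : ℕ} (σ : Equiv.Perm (Fin n)) (i : ℕ) : ℕ :=
  minUpTo σ (n - 1 - i) - minUpTo σ (n - i)

omit hσ in
lemma psi_eq_blocksW : psi σ = blocksW (dW σ) n := rfl

omit hσ in
lemma blocksW_cons (e : ℕ → ℕ) (L : ℕ) :
    blocksW e (L+1) = (true :: List.replicate (e 0) false) ++ blocksW (fun j => e (j+1)) L := by
  simp [blocksW, List.range_succ_eq_map, List.flatMap_map, Nat.succ_eq_add_one]

omit hσ in
lemma blocksW_congr {e e' : ℕ → ℕ} {L : ℕ} (h : ∀ j < L, e j = e' j) :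
    blocksW e L = blocksW e' L := by
  induction L with
  | zero => rfl
  | succ L ih =>
      rw [blocksW_succ, blocksW_succ, ih (fun j hj => h j (by omega)), h L (by omega)]

omit hσ in
lemma blocksW_add (e : ℕ → ℕ) (a b : ℕ) :
    blocksW e (a+b) = blocksW e a ++ blocksW (fun j => e (a+j)) b := by
  simp [blocksW, List.range_add, List.flatMap_append, List.flatMap_map]

omit hσ in
lemma sum_d {a b : ℕ} (hab : a + b ≤ n) :
    minUpTo σ (n-a-b) = minUpTo σ (n-a) + ∑ i ∈ Finset.range b, dW σ (a+i) := by
  induction b with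
  | zero => simp
  | succ b ih =>
      rw [Finset.sum_range_succ, ← Nat.add_assoc, ← ih (by omega)]
      have h1 : dW σ (a+b) = minUpTo σ (n-a-b-1) - minUpTo σ (n-a-b) := by
        unfold dW
        congr 2 <;> omega
      have h3 := minUpTo_anti σ (show n-a-b-1 ≤ n-a-b by omega)
      have h4 : n-a-(b+1) = n-a-b-1 := by omega
      rw [h4]
      omega

lemma tunnel_main {k : ℕ} (hk : k < n) :
    ∃ B C : List Bool, IsTunnel (psi σ) (blocksW (dW σ) k) B C ∧
      (blocksW (dW σ) k).length = k + minUpTo σ (n - k) ∧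
      C.length + valAt σ (n-1-k) + k + (valAt σ (n-1-k) - minUpTo σ (n-k)) + 2 = 2*n := by
  have hn : 0 < n := by omega
  set r := n - 1 - k with hrdef
  have hr : r < n := by omega
  have hidx : n - k = r + 1 := by omega
  set c := valAt σ r with hc
  set μ := minUpTo σ (r+1) with hμ
  have hμc : μ ≤ c := minUpTo_le_valAt σ (show r < r+1 by omega)
  have hcn : c < n := valAt_lt σ hr
  set s := c - μ with hs
  have hsr : s ≤ r := by
    have := s_le_r σ hσ hr
    omega
  set r' := r - s with hr2
  set k2 := k + s with hk2
  have hk2n : k2 < n := by omega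
  have hcr' : c < minUpTo σ r' := by
    rcases Nat.eq_zero_or_pos r' with h0 | hpos
    · rw [h0, minUpTo_zero]; exact hcn
    · obtain ⟨i, hi, hvi⟩ := @minUpTo_exists n σ r' hpos (by omega)
      have := not_mem_S σ hσ hr (i := i) (by omega)
      omega
  have hm1 : minUpTo σ (r'+1) ≤ c := by
    have h1 : valAt σ r' ≤ valAt σ r := mem_S σ hσ hr (by omega) (by omega)
    have h2 := minUpTo_le_valAt σ (show r' < r'+1 by omega)
    omega
  have hμm1 : μ ≤ minUpTo σ (r'+1) := minUpTo_anti σ (by omega)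
  set t := c - minUpTo σ (r'+1) with htdef
  have hdk2 : dW σ k2 = minUpTo σ r' - minUpTo σ (r'+1) := by
    unfold dW
    congr 2 <;> omega
  have htd : t < dW σ k2 := by rw [hdk2]; omega
  have hdk : dW σ k = minUpTo σ r - μ := by
    unfold dW
    congr 2 <;> omega
  have hminsucc : μ = min c (minUpTo σ r) := by rw [hμ, minUpTo_succ, hc]
  -- the middle-block sizes
  set E : ℕ → ℕ := fun j => if j + 1 = s then t else dW σ (k+1+j) with hE
  set B := blocksW E s with hB
  set C := List.replicate (dW σ k2 - t - 1) false ++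
      blocksW (fun j => dW σ (k2+1+j)) (n-k2-1) with hC
  -- sums
  have hsum_mid : ∀ b ≤ s - 1, minUpTo σ (r - b) =
      minUpTo σ r + ∑ i ∈ Finset.range b, dW σ (k+1+i) := by
    intro b hb
    have := sum_d σ (a := k+1) (b := b) (by omega)
    have e1 : n-(k+1)-b = r - b := by omega
    have e2 : n-(k+1) = r := by omega
    rw [e1, e2] at this
    exact this
  have hmr_eq : 1 ≤ s → minUpTo σ r = μ := by
    intro h1
    omega
  have hEs : 1 ≤ s → E (s-1) = t := by
    intro h1
    rw [hE]
    simp only []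
    rw [if_pos (by omega)]
  have htot : ∑ i ∈ Finset.range s, E i = s := by
    rcases Nat.eq_zero_or_pos s with h0 | h1
    · simp [h0]
    · have hsplit : s = (s-1) + 1 := by omega
      rw [hsplit, Finset.sum_range_succ, ← hsplit]
      have hcong : ∑ i ∈ Finset.range (s-1), E i = ∑ i ∈ Finset.range (s-1), dW σ (k+1+i) := by
        apply Finset.sum_congr rfl
        intro i hi
        simp only [Finset.mem_range] at hi
        rw [hE]
        simp only []
        rw [if_neg (by omega)]
      have hmid := hsum_mid (s-1) le_rfl
      have e3 : r - (s-1) = r' + 1 := by omega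
      rw [e3] at hmid
      rw [hcong, hEs h1]
      have := hmr_eq h1
      omega
  have hpartial : ∀ j < s, ∑ i ∈ Finset.range (j+1), E i ≤ j + 1 := by
    intro j hj
    rcases eq_or_lt_of_le (Nat.succ_le_of_lt hj) with he | hlt
    · have he' : j + 1 = s := he
      rw [he', htot]
    · have hcong : ∑ i ∈ Finset.range (j+1), E i = ∑ i ∈ Finset.range (j+1), dW σ (k+1+i) := by
        apply Finset.sum_congr rfl
        intro i hi
        simp only [Finset.mem_range] at hi
        rw [hE]
        simp only []
        rw [if_neg (by omega)]
      have hmid := hsum_mid (j+1) (by omega)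
      have hfc := factC2 σ hσ (t := r - 1 - j) hr (by omega) (by omega)
      have e4 : r - (j+1) = r - 1 - j := by omega
      rw [e4] at hmid
      have := hmr_eq (by omega)
      rw [hcong]
      omega
  have hBdyck : IsDyckWord B := blocksW_isDyck E s hpartial htot
  -- the decomposition
  have hdecomp : psi σ = blocksW (dW σ) k ++ true :: (B ++ false :: C) := by
    have h1 := blocksW_add (dW σ) (k + (s+1)) (n-k2-1)
    have e5 : k + (s+1) + (n-k2-1) = n := by omega
    rw [e5] at h1
    have h2 := blocksW_add (dW σ) k (s+1)
    have h3 := blocksW_cons (fun j => dW σ (k+j)) s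
    have key : (true :: List.replicate (dW σ (k+0)) false) ++
        blocksW (fun j => dW σ (k+(j+1))) s =
        true :: (B ++ false :: List.replicate (dW σ k2 - t - 1) false) := by
      rcases Nat.eq_zero_or_pos s with h0 | h1s
      · have hr'r : r' = r := by omega
        have ht0 : t = 0 := by
          rw [htdef, hr'r]
          omega
        have hdkpos : 0 < dW σ k := by
          rw [hdk]
          rw [hr'r] at hcr'
          omega
        have hk2k : k2 = k := by omega
        rw [h0, hB, h0, hk2k, ht0]
        show (true :: List.replicate (dW σ (k+0)) false) ++ blocksW _ 0 =
          true :: (blocksW E 0 ++ false :: List.replicate (dW σ k - 0 - 1) false)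
        have : blocksW (fun j => dW σ (k+(j+1))) 0 = [] := rfl
        have e0 : blocksW E 0 = [] := rfl
        rw [this, e0, List.append_nil]
        simp only [List.nil_append, Nat.add_zero]
        rw [show dW σ k = (dW σ k - 1) + 1 from by omega, List.replicate_succ]
        simp
      · have hdk0 : dW σ k = 0 := by
          rw [hdk]
          have : minUpTo σ r = μ := hmr_eq h1s
          omega
        rw [Nat.add_zero, hdk0]
        simp only [List.replicate_zero]
        have hsp : s = (s-1)+1 := by omega
        have hL : blocksW (fun j => dW σ (k+(j+1))) s =
            blocksW (fun j => dW σ (k+(j+1))) (s-1) ++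
              true :: List.replicate (dW σ (k+((s-1)+1))) false := by
          conv_lhs => rw [hsp]
          exact blocksW_succ _ (s-1)
        have hR : B = blocksW E (s-1) ++ true :: List.replicate t false := by
          rw [hB]
          conv_lhs => rw [hsp]
          rw [blocksW_succ, hEs h1s]
        have hcong2 : blocksW (fun j => dW σ (k+(j+1))) (s-1) = blocksW E (s-1) := by
          apply blocksW_congr
          intro j hj
          rw [hE]
          simp only []
          rw [if_neg (by omega)]
          congr 1
          omega
        have e6 : k + ((s-1)+1) = k2 := by omega
        have e7 : List.replicate (dW σ k2) false =
            List.replicate t false ++ false :: List.replicate (dW σ k2 - t - 1) false := by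
          conv_lhs => rw [show dW σ k2 = t + ((dW σ k2 - t - 1) + 1) from by omega]
          rw [List.replicate_add, List.replicate_succ]
        rw [hL, hcong2, e6, e7, hR]
        simp
    rw [psi_eq_blocksW, h1, h2, h3, key, hC]
    simp only [List.append_assoc, List.cons_append, List.nil_append]
    have : blocksW (fun j => dW σ (k + (s + 1) + j)) (n - k2 - 1) =
        blocksW (fun j => dW σ (k2 + 1 + j)) (n - k2 - 1) := by
      apply blocksW_congr
      intro j _
      exact congrArg (dW σ) (by omega)
    rw [this]
  refine ⟨B, C, ⟨hdecomp, hBdyck⟩, ?_, ?_⟩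
  · rw [blocksW_length]
    have := sum_d σ (a := 0) (b := k) (by omega)
    have e8 : n - 0 - k = r + 1 := by omega
    have e9 : n - 0 = n := by omega
    rw [e8, e9, minUpTo_n σ hn] at this
    have hcong3 : ∑ i ∈ Finset.range k, dW σ (0+i) = ∑ i ∈ Finset.range k, dW σ i := by
      apply Finset.sum_congr rfl; intro i _; rw [Nat.zero_add]
    rw [hcong3] at this
    rw [hidx]
    omega
  · rw [hC]
    have hlen2 : (blocksW (fun j => dW σ (k2+1+j)) (n-k2-1)).length =
        (n-k2-1) + ∑ i ∈ Finset.range (n-k2-1), dW σ (k2+1+i) := blocksW_length _ _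
    have hsum2 := sum_d σ (a := k2+1) (b := n-k2-1) (by omega)
    have e10 : n-(k2+1)-(n-k2-1) = 0 := by omega
    have e11 : n-(k2+1) = r' := by omega
    rw [e10, e11, minUpTo_zero] at hsum2
    have hmr'n : minUpTo σ r' ≤ n := minUpTo_le_self σ r'
    rw [List.length_append, List.length_replicate, hlen2]
    rw [hidx]
    omega


omit hσ in
lemma blocksW_len_lt (e : ℕ → ℕ) {a b : ℕ} (hab : a < b) :
    (blocksW e a).length < (blocksW e b).length := by
  rw [blocksW_length, blocksW_length]
  have h1 : ∑ i ∈ Finset.range a, e i ≤ ∑ i ∈ Finset.range b, e i :=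
    Finset.sum_le_sum_of_subset (Finset.range_subset_range.mpr (by omega))
  omega

lemma count_tunnels (P : ℕ → ℕ → Prop) :
    Nat.card {T : List Bool × List Bool × List Bool //
      IsTunnel (psi σ) T.1 T.2.1 T.2.2 ∧ P T.1.length T.2.2.length} =
    Nat.card {k : Fin n // P ((k : ℕ) + minUpTo σ (n - (k : ℕ)))
        (2*n - valAt σ (n-1-(k : ℕ)) - (k : ℕ) -
          (valAt σ (n-1-(k : ℕ)) - minUpTo σ (n - (k : ℕ))) - 2)} := by
  choose Bf Cf hT hA hC using fun k : Fin n => tunnel_main σ hσ k.2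
  set g : {k : Fin n // P ((blocksW (dW σ) (k : ℕ)).length) ((Cf k).length)} →
      {T : List Bool × List Bool × List Bool //
        IsTunnel (psi σ) T.1 T.2.1 T.2.2 ∧ P T.1.length T.2.2.length} :=
    fun x => ⟨(blocksW (dW σ) (x.1 : ℕ), Bf x.1, Cf x.1), hT x.1, x.2⟩ with hg
  have hbij : Function.Bijective g := by
    constructor
    · rintro ⟨k, hk⟩ ⟨k', hk'⟩ he
      have h1 : blocksW (dW σ) ((k : Fin n) : ℕ) = blocksW (dW σ) ((k' : Fin n) : ℕ) :=
        congrArg (fun T => T.1.1) he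
      have h2 : ((k : Fin n) : ℕ) = ((k' : Fin n) : ℕ) := by
        by_contra hne
        rcases Nat.lt_or_ge ((k : Fin n) : ℕ) ((k' : Fin n) : ℕ) with h | h
        · have := blocksW_len_lt (dW σ) h
          rw [congrArg List.length h1] at this
          omega
        · have h' : ((k' : Fin n) : ℕ) < ((k : Fin n) : ℕ) := by omega
          have := blocksW_len_lt (dW σ) h'
          rw [congrArg List.length h1] at this
          omega
      exact Subtype.ext (Fin.ext h2)
    · rintro ⟨⟨A, B, C⟩, hTT, hP⟩
      have hget := tunnel_getElem hTT
      rw [psi_eq_blocksW] at hget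
      obtain ⟨j, hj, hlen⟩ := blocksW_true_pos (dW σ) n hget
      obtain ⟨he1, he2, he3⟩ := tunnel_unique hTT (hT ⟨j, hj⟩) hlen
      refine ⟨⟨⟨j, hj⟩, ?_⟩, ?_⟩
      · rw [← he1, ← he3]
        exact hP
      · simp only [hg]
        exact Subtype.ext (by simp [← he1, ← he2, ← he3])
  rw [← Nat.card_eq_of_bijective g hbij]
  apply Nat.card_congr
  apply Equiv.subtypeEquivRight
  intro k
  have hA' := hA k
  have hC' := hC k
  constructor
  · intro hh
    rw [← hA']
    have : (Cf k).length =
        2*n - valAt σ (n-1-(k : ℕ)) - (k : ℕ) -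
          (valAt σ (n-1-(k : ℕ)) - minUpTo σ (n - (k : ℕ))) - 2 := by omega
    rw [← this]
    exact hh
  · intro hh
    rw [hA']
    have : (Cf k).length =
        2*n - valAt σ (n-1-(k : ℕ)) - (k : ℕ) -
          (valAt σ (n-1-(k : ℕ)) - minUpTo σ (n - (k : ℕ))) - 2 := by omega
    rw [this]
    exact hh


lemma ct_eq : ct (psi σ) = Nat.card {k : Fin n //
    (k : ℕ) + minUpTo σ (n - (k : ℕ)) =
      2*n - valAt σ (n-1-(k : ℕ)) - (k : ℕ) -
        (valAt σ (n-1-(k : ℕ)) - minUpTo σ (n - (k : ℕ))) - 2} :=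
  count_tunnels σ hσ (fun a c => a = c)

lemma rt_eq : rt (psi σ) = Nat.card {k : Fin n //
    2*n - valAt σ (n-1-(k : ℕ)) - (k : ℕ) -
        (valAt σ (n-1-(k : ℕ)) - minUpTo σ (n - (k : ℕ))) - 2 <
      (k : ℕ) + minUpTo σ (n - (k : ℕ))} :=
  count_tunnels σ hσ (fun a c => c < a)

omit hσ in
lemma rev_eq (k : Fin n) : Fin.rev k = ⟨n - 1 - (k : ℕ), by omega⟩ := by
  apply Fin.ext
  simp only [Fin.val_rev]
  show n - ((k : ℕ) + 1) = n - 1 - (k : ℕ)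
  omega

lemma basic_facts (k : Fin n) :
    minUpTo σ (n - (k : ℕ)) ≤ valAt σ (n-1-(k : ℕ)) ∧
    valAt σ (n-1-(k : ℕ)) < n ∧
    valAt σ (n-1-(k : ℕ)) - minUpTo σ (n - (k : ℕ)) ≤ n-1-(k : ℕ) := by
  have hk := k.is_lt
  refine ⟨minUpTo_le_valAt σ (by omega), valAt_lt σ (by omega), ?_⟩
  have h := s_le_r σ hσ (r := n-1-(k : ℕ)) (by omega)
  have e : n-1-(k : ℕ)+1 = n - (k : ℕ) := by omega
  rw [e] at h
  exact h

lemma ct_cond_iff (k : Fin n) :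
    ((k : ℕ) + minUpTo σ (n - (k : ℕ)) =
      2*n - valAt σ (n-1-(k : ℕ)) - (k : ℕ) -
        (valAt σ (n-1-(k : ℕ)) - minUpTo σ (n - (k : ℕ))) - 2) ↔
    σ (Fin.rev k) = Fin.rev k := by
  have hk := k.is_lt
  obtain ⟨h1, h2, h3⟩ := basic_facts σ hσ k
  rw [rev_eq (n := n) k]
  rw [Fin.ext_iff]
  have e := valAt_eq σ (show n-1-(k : ℕ) < n by omega)
  simp only []
  rw [← e]
  omega

lemma rt_cond_iff (k : Fin n) :
    (2*n - valAt σ (n-1-(k : ℕ)) - (k : ℕ) -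
        (valAt σ (n-1-(k : ℕ)) - minUpTo σ (n - (k : ℕ))) - 2 <
      (k : ℕ) + minUpTo σ (n - (k : ℕ))) ↔
    Fin.rev k < σ (Fin.rev k) := by
  have hk := k.is_lt
  obtain ⟨h1, h2, h3⟩ := basic_facts σ hσ k
  rw [rev_eq (n := n) k]
  rw [Fin.lt_def]
  have e := valAt_eq σ (show n-1-(k : ℕ) < n by omega)
  simp only []
  rw [← e]
  omega

end Perm
end Stmt9Aux

/-- Krattenthaler's bijection `Ψ` sends fixed points to centered tunnels and
excedances to right tunnels. -/
theorem stmt9 (n : ℕ) (σ : Equiv.Perm (Fin n)) (h : Avoids132 σ) :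
    fp σ = ct (psi σ) ∧ exc σ = rt (psi σ) := by
  classical
  constructor
  · rw [Stmt9Aux.ct_eq σ h,
      Nat.card_congr (Equiv.subtypeEquivRight (Stmt9Aux.ct_cond_iff σ h)),
      Nat.card_eq_fintype_card, Fintype.card_subtype]
    unfold fp
    apply Finset.card_nbij' (fun a => Fin.rev a) (fun a => Fin.rev a)
    · intro a ha
      simp only [Finset.mem_coe, Finset.mem_filter, Finset.mem_univ, true_and] at ha ⊢
      rw [Fin.rev_rev]
      exact ha
    · intro a ha
      simp only [Finset.mem_coe, Finset.mem_filter, Finset.mem_univ, true_and] at ha ⊢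
      exact ha
    · intro a _; exact Fin.rev_rev a
    · intro a _; exact Fin.rev_rev a
  · rw [Stmt9Aux.rt_eq σ h,
      Nat.card_congr (Equiv.subtypeEquivRight (Stmt9Aux.rt_cond_iff σ h)),
      Nat.card_eq_fintype_card, Fintype.card_subtype]
    unfold exc
    apply Finset.card_nbij' (fun a => Fin.rev a) (fun a => Fin.rev a)
    · intro a ha
      simp only [Finset.mem_coe, Finset.mem_filter, Finset.mem_univ, true_and] at ha ⊢
      rw [Fin.rev_rev]
      exact ha
    · intro a ha
      simp only [Finset.mem_coe, Finset.mem_filter, Finset.mem_univ, true_and] at ha ⊢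
      exact ha
    · intro a _; exact Fin.rev_rev a
    · intro a _; exact Fin.rev_rev a
end

section
/- Krattenthaler's bijection Ψ from 132-avoiding permutations in S_n to Dyck paths satisfies rk(σ) = (n − he(Ψ(σ)))/2, where he(D) is the height of the Dyck path D at its midpoint x = n. -/
section Aux

variable {n : ℕ} (σ : Equiv.Perm (Fin n))

private lemma foldr_min_min (l : List ℕ) (a c : ℕ) :
    l.foldr (fun i m => min (valAt σ i) m) (min a c)
      = min a (l.foldr (fun i m => min (valAt σ i) m) c) := by
  induction l with
  | nil => rfl
  | cons x xs ih =>
    simp only [List.foldr_cons]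
    rw [ih, min_left_comm]

private lemma minUpTo_succ' (r : ℕ) :
    minUpTo σ (r + 1) = min (valAt σ r) (minUpTo σ r) := by
  unfold minUpTo
  rw [List.range_succ, List.foldr_append]
  simp only [List.foldr_cons, List.foldr_nil]
  exact foldr_min_min σ _ _ _

private lemma le_minUpTo_iff (r j : ℕ) :
    j ≤ minUpTo σ r ↔ j ≤ n ∧ ∀ i < r, j ≤ valAt σ i := by
  induction r with
  | zero => simp [minUpTo]
  | succ r ih =>
    rw [minUpTo_succ', le_min_iff, ih]
    constructor
    · rintro ⟨h1, h2, h3⟩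
      refine ⟨h2, fun i hi => ?_⟩
      rcases Nat.lt_succ_iff_lt_or_eq.1 hi with h | h
      · exact h3 i h
      · subst h; exact h1
    · rintro ⟨h1, h2⟩
      exact ⟨h2 r (Nat.lt_succ_self r), h1,
        fun i hi => h2 i (hi.trans (Nat.lt_succ_self r))⟩

private lemma minUpTo_le_n (r : ℕ) : minUpTo σ r ≤ n :=
  ((le_minUpTo_iff σ r _).1 le_rfl).1

private lemma minUpTo_le_valAt {r i : ℕ} (hi : i < r) : minUpTo σ r ≤ valAt σ i :=
  ((le_minUpTo_iff σ r _).1 le_rfl).2 i hi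

private lemma minUpTo_anti {r s : ℕ} (hrs : r ≤ s) : minUpTo σ s ≤ minUpTo σ r :=
  (le_minUpTo_iff σ r _).2 ⟨minUpTo_le_n σ s,
    fun i hi => minUpTo_le_valAt σ (hi.trans_le hrs)⟩

private lemma minUpTo_n (hn : 0 < n) : minUpTo σ n = 0 := by
  have hi : ((σ.symm ⟨0, hn⟩ : Fin n) : ℕ) < n := (σ.symm ⟨0, hn⟩).isLt
  have h := minUpTo_le_valAt σ (r := n) hi
  unfold valAt at h
  rw [dif_pos hi] at h
  simpa using h

/-- one block of the Dyck path -/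
private def blk (k : ℕ) : List Bool :=
  true :: List.replicate (minUpTo σ (n - 1 - k) - minUpTo σ (n - k)) false

/-- prefix of the Dyck path consisting of the first `k` blocks -/
private def Apre (k : ℕ) : List Bool := (List.range k).flatMap (blk σ)

private lemma psi_eq_Apre : psi σ = Apre σ n := rfl

private lemma Apre_succ (k : ℕ) : Apre σ (k + 1) = Apre σ k ++ blk σ k := by
  unfold Apre
  rw [List.range_succ, List.flatMap_append]
  simp

private lemma length_blk (k : ℕ) :
    (blk σ k).length = 1 + (minUpTo σ (n - 1 - k) - minUpTo σ (n - k)) := by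
  simp [blk]; omega

private lemma count_true_blk (k : ℕ) : (blk σ k).count true = 1 := by
  simp [blk, List.count_replicate]

private lemma length_Apre (k : ℕ) :
    (Apre σ k).length + minUpTo σ n = k + minUpTo σ (n - k) := by
  induction k with
  | zero => simp [Apre, minUpTo]
  | succ k ih =>
    rw [Apre_succ, List.length_append, length_blk]
    have h1 : minUpTo σ (n - k) ≤ minUpTo σ (n - 1 - k) :=
      minUpTo_anti σ (by omega)
    have h2 : minUpTo σ n ≤ minUpTo σ (n - k) := minUpTo_anti σ (by omega)
    have h3 : n - (k + 1) = n - 1 - k := by omega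
    rw [h3]
    omega

private lemma count_true_Apre (k : ℕ) : (Apre σ k).count true = k := by
  induction k with
  | zero => simp [Apre]
  | succ k ih => rw [Apre_succ, List.count_append, count_true_blk, ih]

private lemma Apre_add (k j : ℕ) : ∃ rest, Apre σ (k + j) = Apre σ k ++ rest := by
  induction j with
  | zero => exact ⟨[], by simp [Apre]⟩
  | succ j ih =>
    obtain ⟨rest, hrest⟩ := ih
    exact ⟨rest ++ blk σ (k + j),
      by rw [← Nat.add_assoc, Apre_succ, hrest, List.append_assoc]⟩

private lemma count_true_add_count_false (l : List Bool) :
    l.count true + l.count false = l.length := by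
  induction l with
  | nil => rfl
  | cons b l ih =>
    cases b <;> simp only [List.count_cons, List.length_cons] <;> simp <;> omega

end Aux

/-- For Krattenthaler's bijection `Ψ`, the rank of `σ` is `(n - he(Ψ σ)) / 2`,
where `he` is the height of the Dyck path at its midpoint. -/
theorem stmt10 (n : ℕ) (σ : Equiv.Perm (Fin n)) (h : Avoids132 σ) :
    2 * (rk σ : ℤ) = (n : ℤ) - heInt (psi σ) := by
  classical
  rcases Nat.eq_zero_or_pos n with h0 | hn
  · subst h0
    have h1 : psi σ = [] := rfl
    have h2 : rk σ = 0 := by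
      unfold rk
      have hset : {k : ℕ | ∀ i : Fin 0, (i : ℕ) < k → k ≤ (σ i : ℕ)} = Set.univ := by
        ext k
        simp only [Set.mem_setOf_eq, Set.mem_univ, iff_true]
        exact fun i => i.elim0
      rw [hset, csSup_of_not_bddAbove not_bddAbove_univ, csSup_empty]
      rfl
    rw [h1, h2]
    simp [heInt]
  · -- main case
    set S : Set ℕ := {k | ∀ i : Fin n, (i : ℕ) < k → k ≤ (σ i : ℕ)} with hSdef
    have h0S : (0 : ℕ) ∈ S := fun i hi => absurd hi (by omega)
    have hub : ∀ k ∈ S, k ≤ n := by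
      intro k hk
      by_contra hkn
      push_neg at hkn
      have h0 := hk ⟨0, hn⟩ (by simpa using hn.trans hkn)
      have := (σ ⟨0, hn⟩).isLt
      omega
    have hbdd : BddAbove S := ⟨n, hub⟩
    have hrk : rk σ = sSup S := rfl
    set r := rk σ with hrdef
    have hrS : r ∈ S := by rw [hrk]; exact Nat.sSup_mem ⟨0, h0S⟩ hbdd
    have hrn : r ≤ n := hub r hrS
    have hmn : minUpTo σ n = 0 := minUpTo_n σ hn
    have hr1 : r ≤ minUpTo σ r := by
      refine (le_minUpTo_iff σ r r).2 ⟨hrn, fun i hi => ?_⟩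
      have hin : i < n := hi.trans_le hrn
      unfold valAt
      rw [dif_pos hin]
      exact hrS ⟨i, hin⟩ hi
    have hr2 : minUpTo σ (r + 1) ≤ r := by
      by_contra hcon
      push_neg at hcon
      have hmem : r + 1 ∈ S := by
        intro i hi
        have h := minUpTo_le_valAt σ (r := r + 1) (i := (i : ℕ)) hi
        unfold valAt at h
        rw [dif_pos i.isLt] at h
        simp only [Fin.eta] at h
        omega
      have := le_csSup hbdd hmem
      rw [← hrk] at this
      omega
    have hrltn : r < n := by
      rcases Nat.lt_or_ge r n with h | h
      · exact h
      · exfalso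
        have : minUpTo σ r ≤ minUpTo σ n := minUpTo_anti σ h
        omega
    -- numbers
    set b : ℕ := n - r - 1 with hbdef
    set p : ℕ := minUpTo σ r with hpdef
    set q : ℕ := minUpTo σ (r + 1) with hqdef
    have hqp : q ≤ p := minUpTo_anti σ (by omega)
    -- length of Apre b
    have hnb : n - b = r + 1 := by omega
    have hlenb : (Apre σ b).length = b + q := by
      have := length_Apre σ b
      rw [hmn, hnb] at this
      omega
    have hlA_lt : (Apre σ b).length < n := by omega
    -- total length of psi
    have hlenpsi : (psi σ).length = 2 * n := by
      have := length_Apre σ n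
      rw [hmn, Nat.sub_self] at this
      have hm0 : minUpTo σ 0 = n := rfl
      rw [hm0] at this
      rw [psi_eq_Apre]
      omega
    -- split psi
    obtain ⟨rest, hrest⟩ : ∃ rest, psi σ = Apre σ b ++ (blk σ b ++ rest) := by
      obtain ⟨rest, hr'⟩ := Apre_add σ (b + 1) (n - (b + 1))
      rw [Nat.add_sub_cancel' (by omega : b + 1 ≤ n)] at hr'
      exact ⟨rest, by rw [psi_eq_Apre, hr', Apre_succ, List.append_assoc]⟩
    -- the first-half word
    have hblk : blk σ b = true :: List.replicate (p - q) false := by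
      unfold blk
      have e1 : n - 1 - b = r := by omega
      have e2 : n - b = r + 1 := hnb
      rw [e1, e2]
    have ht1 : 1 ≤ n - (b + q) := by omega
    have ht2 : n - (b + q) ≤ 1 + (p - q) := by omega
    have htake : (psi σ).take n
        = Apre σ b ++ (true :: List.replicate (min (n - (b + q) - 1) (p - q)) false) := by
      rw [hrest, List.take_append,
        List.take_of_length_le (le_of_lt hlA_lt), hlenb]
      congr 1
      rw [List.take_append, hblk]
      have hlb : (true :: List.replicate (p - q) false).length = 1 + (p - q) := by
        simp; omega
      have h0' : n - (b + q) - (true :: List.replicate (p - q) false).length = 0 := by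
        rw [hlb]; omega
      rw [h0', List.take_zero, List.append_nil]
      obtain ⟨t', ht'⟩ : ∃ t', n - (b + q) = t' + 1 := ⟨n - (b + q) - 1, by omega⟩
      rw [ht']
      rw [List.take_succ_cons, List.take_replicate]
      norm_num
    -- counts
    have hCT : ((psi σ).take n).count true = n - r := by
      rw [htake, List.count_append, count_true_Apre]
      have h1 : (true :: List.replicate (min (n - (b + q) - 1) (p - q)) false).count true
          = 1 := by simp [List.count_replicate]
      rw [h1]
      omega
    have hlen_take : ((psi σ).take n).length = n := by
      rw [List.length_take, hlenpsi]
      omega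
    have hCF : ((psi σ).take n).count false = r := by
      have := count_true_add_count_false ((psi σ).take n)
      rw [hCT, hlen_take] at this
      omega
    have hhalf : (psi σ).length / 2 = n := by rw [hlenpsi]; omega
    unfold heInt
    rw [hhalf, hCT, hCF]
    have : (↑(n - r) : ℤ) = (n : ℤ) - r := by
      rw [Nat.cast_sub hrn]
    rw [this]
    ring
end

section
/- Knuth's bijection Φ from 321-avoiding permutations in S_n to Dyck paths satisfies ℓ(σ) = (n + he(Φ(σ)))/2, where ℓ(σ) is the length of the longest increasing subsequence of σ and he(D) is the height of D at x = n. -/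
/-- RSK row insertion of `x` into an increasing row: returns the new row and the
bumped entry (if any); `x` bumps the leftmost entry larger than it. -/
def insert1 : List ℕ → ℕ → List ℕ × Option ℕ
  | [], x => ([x], none)
  | y :: ys, x =>
    if x < y then (x :: ys, some y)
    else
      let p := insert1 ys x
      (y :: p.1, p.2)

/-- One step of RSK for permutations with at most two rows: insert `x` into the
first row; a bumped entry is appended to the second row. -/
def rskStep (s : List ℕ × List ℕ) (x : ℕ) : List ℕ × List ℕ :=
  let p := insert1 s.1 x
  match p.2 with
  | none => (p.1, s.2)
  | some y => (p.1, s.2 ++ [y])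

/-- The two rows of the RSK insertion tableau `P` after inserting `σ 0, …, σ (m-1)`. -/
def rskRows {n : ℕ} (σ : Equiv.Perm (Fin n)) (m : ℕ) : List ℕ × List ℕ :=
  (((List.range m).map (valAt σ)).foldl rskStep ([], []))

/-- The entry bumped (if any) when `σ i` is inserted during RSK. -/
def bumpAt {n : ℕ} (σ : Equiv.Perm (Fin n)) (i : ℕ) : Option ℕ :=
  (insert1 (rskRows σ i).1 (valAt σ i)).2

/-- Knuth's bijection `Φ` from 321-avoiding permutations to Dyck words: the first
half records, for each value `v`, whether `v` lies in the first row of the insertion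
tableau `P`; the second half is the word similarly obtained from the recording tableau
`Q` (position `i` is in the first row of `Q` iff no bumping occurs at step `i`),
written backwards. -/
def phi {n : ℕ} (σ : Equiv.Perm (Fin n)) : List Bool :=
  ((List.range n).map fun v => decide (v ∈ (rskRows σ n).1)) ++
    ((List.range n).map fun i => decide (¬ bumpAt σ i = none)).reverse

/-!
Only the first row `R` of the insertion tableau matters: the first half of `Φ σ` has an up-step
exactly at the values in `R`, so its height at the midpoint is `2 |R| - n`, and `|R| = ℓ(σ)` by
Schensted's theorem.

For Schensted's theorem, let `c v` be the number of entries `< v` in the row built from a word `M`.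
Inserting `x` leaves `c v` unchanged for `v ≤ x` and makes it `max (c v) (c x + 1)` for `v > x`,
since `x` either replaces the least entry above it or is appended. The longest increasing subword
of `M` with all entries `< v` obeys the same recurrence, because such a subword of `M ++ [x]`
either avoids the last letter or ends with it.
-/

lemma insert1_spec (r : List ℕ) (x : ℕ) :
    ((∀ y ∈ r, y ≤ x) ∧ insert1 r x = (r ++ [x], none)) ∨
    ∃ a y b, r = a ++ y :: b ∧ (∀ z ∈ a, z ≤ x) ∧ x < y ∧
      insert1 r x = (a ++ x :: b, some y) := by
  induction r with
  | nil => simp [insert1]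
  | cons y ys ih =>
    by_cases hxy : x < y
    · exact .inr ⟨[], y, ys, rfl, by simp, hxy, by simp [insert1, hxy]⟩
    · have hyx : y ≤ x := not_lt.mp hxy
      rcases ih with ⟨hle, heq⟩ | ⟨a, z, b, rfl, hle, hxz, heq⟩
      · exact .inl ⟨by simpa [hyx] using hle, by simp [insert1, hxy, heq]⟩
      · exact .inr ⟨y :: a, z, b, rfl, by simpa [hyx] using hle, hxz,
          by simp [insert1, hxy, heq]⟩

lemma mem_insert1_fst {r : List ℕ} {x y : ℕ} (hy : y ∈ (insert1 r x).1) : y = x ∨ y ∈ r := by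
  rcases insert1_spec r x with ⟨-, heq⟩ | ⟨a, z, b, rfl, -, -, heq⟩ <;>
    rw [heq] at hy <;> grind

lemma pairwise_insert1_fst {r : List ℕ} {x : ℕ} (hr : r.Pairwise (· < ·)) (hx : x ∉ r) :
    (insert1 r x).1.Pairwise (· < ·) := by
  rcases insert1_spec r x with ⟨hle, heq⟩ | ⟨a, y, b, rfl, hle, hxy, heq⟩ <;> rw [heq]
  · simp only [List.pairwise_append, List.pairwise_singleton, List.mem_singleton] at hr ⊢
    grind
  · simp only [List.pairwise_append, List.pairwise_cons, List.mem_cons] at hr ⊢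
    grind

lemma le_countP_insert1_fst_iff {r : List ℕ} {x : ℕ} (hr : r.Pairwise (· < ·)) (hx : x ∉ r)
    (k v : ℕ) :
    k ≤ (insert1 r x).1.countP (· < v) ↔
      k ≤ r.countP (· < v) ∨ x < v ∧ k - 1 ≤ r.countP (· < x) := by
  rcases insert1_spec r x with ⟨hle, heq⟩ | ⟨a, y, b, rfl, hle, hxy, heq⟩ <;> rw [heq]
  · have hlt : ∀ z ∈ r, z < x := fun z hz => (hle z hz).lt_of_ne (by grind)
    have hcrx : r.countP (· < x) = r.length := List.countP_eq_length.2 (by grind)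
    have hcrv : x < v → r.countP (· < v) = r.length := fun _ =>
      List.countP_eq_length.2 (by grind)
    simp only [List.countP_append, List.countP_singleton, decide_eq_true_eq]
    split_ifs <;> omega
  · simp only [List.pairwise_append, List.pairwise_cons, List.mem_cons] at hr
    have hax : ∀ z ∈ a, z < x := fun z hz => (hle z hz).lt_of_ne (by grind)
    have hcax : a.countP (· < x) = a.length := List.countP_eq_length.2 (by grind)
    have hcbx : b.countP (· < x) = 0 := List.countP_eq_zero.2 (by grind)
    have hcav : x < v → a.countP (· < v) = a.length := fun _ =>
      List.countP_eq_length.2 (by grind)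
    have hcbv : v ≤ y → b.countP (· < v) = 0 := fun _ => List.countP_eq_zero.2 (by grind)
    simp only [List.countP_append, List.countP_cons, decide_eq_true_eq]
    split_ifs <;> omega

def firstRow (M : List ℕ) : List ℕ := M.foldl (fun r x => (insert1 r x).1) []

lemma firstRow_append_singleton (M : List ℕ) (x : ℕ) :
    firstRow (M ++ [x]) = (insert1 (firstRow M) x).1 := by
  simp [firstRow]

lemma firstRow_subset (M : List ℕ) : firstRow M ⊆ M := by
  induction M using List.reverseRecOn with
  | nil => simp [firstRow]
  | append_singleton M x ih =>
    intro y hy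
    rw [firstRow_append_singleton] at hy
    rcases mem_insert1_fst hy with rfl | hy
    · simp
    · simp [ih hy]

lemma pairwise_firstRow {M : List ℕ} (hM : M.Nodup) : (firstRow M).Pairwise (· < ·) := by
  induction M using List.reverseRecOn with
  | nil => simp [firstRow]
  | append_singleton M x ih =>
    rw [List.nodup_append] at hM
    rw [firstRow_append_singleton]
    exact pairwise_insert1_fst (ih hM.1) fun hx =>
      hM.2.2 x (firstRow_subset M hx) x (by simp) rfl

def HasIncSublistBelow (M : List ℕ) (v k : ℕ) : Prop :=
  ∃ s : List ℕ, s.Sublist M ∧ s.Pairwise (· < ·) ∧ (∀ y ∈ s, y < v) ∧ k ≤ s.length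

lemma hasIncSublistBelow_append_singleton (M : List ℕ) (x v k : ℕ) :
    HasIncSublistBelow (M ++ [x]) v k ↔
      HasIncSublistBelow M v k ∨ x < v ∧ HasIncSublistBelow M x (k - 1) := by
  constructor
  · rintro ⟨s, hs, hp, hv, hk⟩
    obtain ⟨t, l, rfl, ht, hl⟩ := List.sublist_append_iff.1 hs
    rcases List.sublist_singleton.1 hl with rfl | rfl
    · exact .inl ⟨t, ht, by simpa using hp, by simpa using hv, by simpa using hk⟩
    · simp only [List.pairwise_append, List.pairwise_singleton, List.mem_singleton] at hp
      refine .inr ⟨hv x (by simp), t, ht, hp.1, fun y hy => hp.2.2 y hy x rfl, ?_⟩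
      rw [List.length_append, List.length_singleton] at hk; omega
  · rintro (⟨s, hs, hp, hv, hk⟩ | ⟨hxv, t, ht, hp, hx, hk⟩)
    · exact ⟨s, hs.trans (List.sublist_append_left M [x]), hp, hv, hk⟩
    · refine ⟨t ++ [x], ht.append (List.Sublist.refl [x]), ?_, ?_, ?_⟩
      · simpa [List.pairwise_append] using ⟨hp, hx⟩
      · simp only [List.mem_append, List.mem_singleton]
        rintro y (hy | rfl)
        exacts [(hx y hy).trans hxv, hxv]
      · rw [List.length_append, List.length_singleton]; omega

theorem hasIncSublistBelow_iff_le_countP_firstRow {M : List ℕ} (hM : M.Nodup) (v k : ℕ) :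
    HasIncSublistBelow M v k ↔ k ≤ (firstRow M).countP (· < v) := by
  induction M using List.reverseRecOn generalizing v k with
  | nil => simp [HasIncSublistBelow, firstRow]
  | append_singleton M x ih =>
    rw [List.nodup_append] at hM
    have hx : x ∉ firstRow M := fun hx => hM.2.2 x (firstRow_subset M hx) x (by simp) rfl
    rw [hasIncSublistBelow_append_singleton, firstRow_append_singleton,
      le_countP_insert1_fst_iff (pairwise_firstRow hM.1) hx, ih hM.1, ih hM.1]

lemma exists_sublist_pairwise_lt_iff_le_length_firstRow {M : List ℕ} (hM : M.Nodup) (k : ℕ) :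
    (∃ s : List ℕ, s.Sublist M ∧ s.Pairwise (· < ·) ∧ s.length = k) ↔
      k ≤ (firstRow M).length := by
  have hv : ∀ y ∈ M, y < M.sum + 1 := fun y hy => Nat.lt_succ_of_le (List.le_sum_of_mem hy)
  have hrow : (firstRow M).countP (· < M.sum + 1) = (firstRow M).length :=
    List.countP_eq_length.2 fun y hy => by simpa using hv y (firstRow_subset M hy)
  rw [← hrow, ← hasIncSublistBelow_iff_le_countP_firstRow hM]
  constructor
  · rintro ⟨s, hs, hp, rfl⟩
    exact ⟨s, hs, hp, fun y hy => hv y (hs.subset hy), le_rfl⟩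
  · rintro ⟨s, hs, hp, -, hk⟩
    exact ⟨s.take k, (List.take_sublist k s).trans hs, hp.sublist (List.take_sublist k s),
      by simp [hk]⟩

lemma exists_strictMono_comp_iff_sublist_ofFn {α : Type*} [Preorder α] {n k : ℕ}
    (g : Fin n → α) :
    (∃ f : Fin k → Fin n, StrictMono f ∧ StrictMono (g ∘ f)) ↔
      ∃ s : List α, s.Sublist (List.ofFn g) ∧ s.Pairwise (· < ·) ∧ s.length = k := by
  constructor
  · rintro ⟨f, hf, hgf⟩
    refine ⟨List.ofFn (g ∘ f), List.sublist_iff_exists_fin_orderEmbedding_get_eq.2 ?_,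
      List.pairwise_ofFn.2 fun i j hij => hgf hij, List.length_ofFn⟩
    refine ⟨OrderEmbedding.ofStrictMono (fun i => Fin.cast (by simp) (f (Fin.cast (by simp) i)))
      fun i j hij => hf hij, fun i => by simp [Fin.cast]⟩
  · rintro ⟨s, hs, hp, rfl⟩
    obtain ⟨e, he⟩ := List.sublist_iff_exists_fin_orderEmbedding_get_eq.1 hs
    refine ⟨fun i => Fin.cast List.length_ofFn (e i), fun i j hij => e.strictMono hij,
      fun i j hij => ?_⟩
    convert List.pairwise_iff_get.1 hp i j hij using 1 <;> simpa [Fin.cast] using (he _).symm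

lemma rskStep_fst (s : List ℕ × List ℕ) (x : ℕ) : (rskStep s x).1 = (insert1 s.1 x).1 := by
  unfold rskStep
  cases h : (insert1 s.1 x).2 <;> simp [h]

lemma foldl_rskStep_fst (M : List ℕ) (s : List ℕ × List ℕ) :
    (M.foldl rskStep s).1 = M.foldl (fun r x => (insert1 r x).1) s.1 := by
  induction M generalizing s with
  | nil => rfl
  | cons x M ih => rw [List.foldl_cons, List.foldl_cons, ih, rskStep_fst]

lemma map_valAt_range {n : ℕ} (σ : Equiv.Perm (Fin n)) :
    (List.range n).map (valAt σ) = List.ofFn fun i => (σ i : ℕ) :=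
  List.ext_getElem (by simp) fun i h _ => by simp at h; simp [valAt, h]

lemma rskRows_fst {n : ℕ} (σ : Equiv.Perm (Fin n)) :
    (rskRows σ n).1 = firstRow (List.ofFn fun i => (σ i : ℕ)) := by
  rw [rskRows, foldl_rskStep_fst, map_valAt_range]
  rfl

lemma nodup_ofFn_perm {n : ℕ} (σ : Equiv.Perm (Fin n)) :
    (List.ofFn fun i => (σ i : ℕ)).Nodup :=
  List.nodup_ofFn.2 (Fin.val_injective.comp σ.injective)

lemma lis_eq_length_rskRows_fst {n : ℕ} (σ : Equiv.Perm (Fin n)) :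
    lis σ = (rskRows σ n).1.length := by
  have hset : {k | ∃ f : Fin k → Fin n, StrictMono f ∧ StrictMono (σ ∘ f)} =
      Set.Iic (rskRows σ n).1.length := by
    ext k
    rw [Set.mem_Iic, rskRows_fst,
      ← exists_sublist_pairwise_lt_iff_le_length_firstRow (nodup_ofFn_perm σ),
      ← exists_strictMono_comp_iff_sublist_ofFn]
    rfl
  rw [lis, hset, csSup_Iic]

lemma countP_mem_range_eq_length {r : List ℕ} {n : ℕ} (hr : r.Nodup) (h : ∀ y ∈ r, y < n) :
    (List.range n).countP (· ∈ r) = r.length := by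
  rw [List.countP_eq_length_filter]
  refine List.Perm.length_eq ((List.perm_ext_iff_of_nodup (List.nodup_range.filter _) hr).2 ?_)
  intro y
  simpa using h y

lemma heInt_phi {n : ℕ} (σ : Equiv.Perm (Fin n)) :
    heInt (phi σ) = 2 * ((rskRows σ n).1.length : ℤ) - n := by
  set A := (List.range n).map fun v => decide (v ∈ (rskRows σ n).1)
  have hcount : A.count true = (rskRows σ n).1.length := by
    rw [List.count_eq_countP, List.countP_map, rskRows_fst]
    refine (List.countP_congr fun v _ => by simp).trans
      (countP_mem_range_eq_length (pairwise_firstRow (nodup_ofFn_perm σ)).nodup fun y hy => ?_)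
    obtain ⟨i, rfl⟩ := List.mem_ofFn.1 (firstRow_subset _ hy)
    exact (σ i).isLt
  have htake : (phi σ).take ((phi σ).length / 2) = A := by
    rw [phi, List.length_append, List.length_map, List.length_reverse, List.length_map,
      List.length_range, show (n + n) / 2 = n by omega, List.take_left' (by simp)]
  have htf := List.count_true_add_count_false A
  have hA : A.length = n := by simp [A]
  rw [heInt, htake]
  omega

theorem stmt13_general (n : ℕ) (σ : Equiv.Perm (Fin n)) :
    2 * (lis σ : ℤ) = (n : ℤ) + heInt (phi σ) := by
  rw [lis_eq_length_rskRows_fst, heInt_phi]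
  ring

/-- For Knuth's bijection `Φ`, the length of the longest increasing subsequence of
`σ` is `(n + he(Φ σ)) / 2`, where `he` is the height of the Dyck path at its midpoint. -/
theorem stmt13 (n : ℕ) (σ : Equiv.Perm (Fin n)) (h : Avoids321 σ) :
    2 * (lis σ : ℤ) = (n : ℤ) + heInt (phi σ) :=
  stmt13_general n σ
end
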